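/- arXiv:2501.13980 — 8 statements merged into one kernel-verified Lean document; each statement's English description precedes it below -/
import Mathlib

section
/- Let G be a finite simple graph of order n such that for every vertex v of G, the subgraph induced by the neighborhood N(v) is isomorphic to the disjoint union C_3 + K_1 (a triangle plus an isolated vertex). Then n ≡ 0 (mod 4). -/
/-- A graph `G` is locally nonforesty if for every vertex `v`, the subgraph induced by
the neighborhood of `v` contains a cycle (i.e., is not acyclic). -/
def LocallyNonforesty {V : Type*} (G : SimpleGraph V) : Prop :=
  ∀ v : V, ¬ (G.induce (G.neighborSet v)).IsAcyclic

/-- The disjoint union `C₃ + K₁` of a triangle and an isolated vertex,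
realized on `Fin 4` with the triangle on `{0,1,2}` and `3` isolated. -/
def C3K1 : SimpleGraph (Fin 4) where
  Adj i j := i ≠ j ∧ i ≠ 3 ∧ j ≠ 3
  symm := by
    constructor
    intro i j h
    exact ⟨h.1.symm, h.2.2, h.2.1⟩
  loopless := by
    constructor
    intro i h
    exact h.1 rfl

section Aux

open Finset
open scoped Classical

variable {V : Type*} [Fintype V] {G : SimpleGraph V}

private lemma third_vertex : ∀ i j : Fin 4, ∃ l : Fin 4, l ≠ i ∧ l ≠ j := by decide

/-- The closed "K4-class" of a vertex. -/
noncomputable def GCls (G : SimpleGraph V) (v : V) : Finset V :=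
  insert v (Finset.univ.filter fun w => G.Adj v w ∧ ∃ x, G.Adj v x ∧ G.Adj w x)

lemma mem_GCls {v w : V} :
    w ∈ GCls G v ↔ w = v ∨ (G.Adj v w ∧ ∃ x, G.Adj v x ∧ G.Adj w x) := by
  simp [GCls]

lemma self_mem_GCls (v : V) : v ∈ GCls G v := mem_GCls.mpr (Or.inl rfl)

/-- Structure of the class: it is the vertex set of a K4. -/
lemma GCls_pack (v : V) (e : (G.induce (G.neighborSet v)) ≃g C3K1) :
    ∃ f : Fin 4 → V, Function.Injective f ∧
      (∀ i j : Fin 4, i ≠ j → G.Adj (f i) (f j)) ∧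
      GCls G v = Finset.univ.image f := by
  have hmem : ∀ i : Fin 4, G.Adj v (e.symm i) := fun i => (e.symm i).2
  have hadj : ∀ i j : Fin 4, i ≠ j → i ≠ 3 → j ≠ 3 →
      G.Adj (e.symm i : V) (e.symm j : V) := by
    intro i j hij hi hj
    exact e.symm.map_adj_iff.mpr ⟨hij, hi, hj⟩
  refine ⟨fun i => if i = 3 then v else (e.symm i : V), ?_, ?_, ?_⟩
  · intro i j h
    by_cases hi : i = 3 <;> by_cases hj : j = 3 <;> simp [hi, hj] at h ⊢
    · exact absurd h (hmem j).ne
    · exact absurd h.symm (hmem i).ne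
    · exact e.symm.injective (Subtype.coe_injective h)
  · intro i j hij
    by_cases hi : i = 3 <;> by_cases hj : j = 3 <;> simp [hi, hj]
    · exact absurd (hi.trans hj.symm) hij
    · exact hmem j
    · exact (hmem i).symm
    · exact hadj i j hij hi hj
  · ext w
    rw [mem_GCls]
    simp only [Finset.mem_image, Finset.mem_univ, true_and]
    constructor
    · rintro (rfl | ⟨hvw, x, hvx, hwx⟩)
      · exact ⟨3, by simp⟩
      · set w' : G.neighborSet v := ⟨w, hvw⟩
        set x' : G.neighborSet v := ⟨x, hvx⟩
        have hadj' : C3K1.Adj (e w') (e x') := e.map_adj_iff.mpr hwx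
        refine ⟨e w', ?_⟩
        have h3 : (e w' : Fin 4) ≠ 3 := hadj'.2.1
        simp [h3, w']
    · rintro ⟨i, rfl⟩
      by_cases hi : i = 3
      · simp [hi]
      · right
        simp only [hi, if_false]
        refine ⟨hmem i, ?_⟩
        by_cases hi0 : i = 0
        · exact ⟨e.symm 1, hmem 1, hadj i 1 (by simp [hi0]) hi (by decide)⟩
        · exact ⟨e.symm 0, hmem 0, hadj i 0 hi0 hi (by decide)⟩

lemma GCls_card (v : V) (e : (G.induce (G.neighborSet v)) ≃g C3K1) :
    (GCls G v).card = 4 := by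
  obtain ⟨f, hinj, -, hset⟩ := GCls_pack v e
  rw [hset, Finset.card_image_of_injective _ hinj]
  simp

lemma GCls_eq_of_mem (hloc : ∀ v : V, Nonempty ((G.induce (G.neighborSet v)) ≃g C3K1))
    {v w : V} (h : w ∈ GCls G v) : GCls G w = GCls G v := by
  obtain ⟨f, hinj, hadj, hset⟩ := GCls_pack v (hloc v).some
  rw [hset] at h
  obtain ⟨i, -, rfl⟩ := Finset.mem_image.mp h
  have hsub : GCls G v ⊆ GCls G (f i) := by
    intro z hz
    rw [hset] at hz
    obtain ⟨j, -, rfl⟩ := Finset.mem_image.mp hz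
    by_cases hji : j = i
    · subst hji; exact self_mem_GCls (f j)
    · obtain ⟨l, hli, hlj⟩ := third_vertex i j
      exact mem_GCls.mpr (Or.inr ⟨hadj i j (Ne.symm hji), f l,
        hadj i l (Ne.symm hli), hadj j l (Ne.symm hlj)⟩)
  have h1 : (GCls G v).card = 4 := GCls_card v (hloc v).some
  have h2 : (GCls G (f i)).card = 4 := GCls_card (f i) (hloc (f i)).some
  exact (Finset.eq_of_subset_of_card_le hsub (by omega)).symm

end Aux

theorem stmt_0 {V : Type*} [Fintype V] (G : SimpleGraph V) (n : ℕ)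
    (hn : Fintype.card V = n)
    (hloc : ∀ v : V, Nonempty ((G.induce (G.neighborSet v)) ≃g C3K1)) :
    n % 4 = 0 := by
  classical
  set s : Setoid V := ⟨fun v w => w ∈ GCls G v, by
    refine ⟨self_mem_GCls, ?_, ?_⟩
    · intro v w h
      rw [GCls_eq_of_mem hloc h]
      exact self_mem_GCls v
    · intro v w u h1 h2
      rw [← GCls_eq_of_mem hloc h1]
      exact h2⟩ with hs
  have hcard := Finset.card_eq_sum_card_fiberwise
    (f := fun v : V => Quotient.mk s v) (s := Finset.univ) (t := Finset.univ)
    (fun x _ => Finset.mem_univ _)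
  have hfib : ∀ q : Quotient s,
      (Finset.univ.filter fun w => Quotient.mk s w = q).card = 4 := by
    intro q
    obtain ⟨v, rfl⟩ := Quotient.exists_rep q
    have heq : (Finset.univ.filter fun w => Quotient.mk s w = Quotient.mk s v)
        = GCls G v := by
      ext w
      simp only [Finset.mem_filter, Finset.mem_univ, true_and, Quotient.eq]
      constructor
      · intro h
        have h' : v ∈ GCls G w := h
        rw [GCls_eq_of_mem hloc h']
        exact self_mem_GCls w
      · intro h
        show v ∈ GCls G w
        rw [GCls_eq_of_mem hloc h]
        exact self_mem_GCls v
    rw [heq]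
    exact GCls_card v (hloc v).some
  rw [Finset.card_univ, hn] at hcard
  rw [hcard]
  simp only [hfib]
  rw [Finset.sum_const, smul_eq_mul]
  omega
end

section
/- Let n ≥ 8 and let G be a 4-connected locally nonforesty graph of order n. Then the size of G is at least h(n), where h(n) = 2n if n ≡ 0 (mod 4) and h(n) = 2n + 1 otherwise. -/
open SimpleGraph Finset
set_option linter.unusedSectionVars false
set_option maxHeartbeats 1000000

/-- A graph is `k`-connected if it has more than `k` vertices and deleting any set of
fewer than `k` vertices leaves a connected graph. -/
def KConnected {V : Type*} [Fintype V] (G : SimpleGraph V) (k : ℕ) : Prop :=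
  k < Fintype.card V ∧
    ∀ S : Finset V, S.card < k → (G.induce ((↑S : Set V)ᶜ)).Connected

section Helpers

lemma closed_set_false {W : Type*} (H : SimpleGraph W) (hH : H.Connected)
    (T : Set W) (hcl : ∀ x ∈ T, ∀ y, H.Adj x y → y ∈ T)
    {u v : W} (hu : u ∈ T) (hv : v ∉ T) : False := by
  have aux : ∀ {x y : W} (_ : H.Walk x y), x ∉ T → y ∉ T := by
    intro x y w
    induction w with
    | nil => exact id
    | cons h p ih => exact fun hx => ih fun hz => hx (hcl _ hz _ h.symm)
  exact aux ((hH.preconnected v u).some) hv hu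

lemma cut_lemma {V : Type*} [Fintype V] [DecidableEq V] {G : SimpleGraph V}
    (hconn : KConnected G 4) (S T : Finset V) (hS : S.card < 4)
    (hdisj : ∀ t ∈ T, t ∉ S) (hne : T.Nonempty)
    (hsmall : (T ∪ S).card < Fintype.card V)
    (hcl : ∀ t ∈ T, ∀ u, G.Adj t u → u ∈ T ∪ S) : False := by
  have hc := hconn.2 S hS
  obtain ⟨w, hw⟩ : ∃ w, w ∉ T ∪ S := by
    by_contra h
    push_neg at h
    have : (univ : Finset V) ⊆ T ∪ S := fun x _ => h x
    have := Finset.card_le_card this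
    simp only [Finset.card_univ] at this
    omega
  obtain ⟨t, ht⟩ := hne
  have htc : t ∈ ((↑S : Set V)ᶜ) := fun hts => hdisj t ht hts
  have hwc : w ∈ ((↑S : Set V)ᶜ) := fun hws => hw (Finset.mem_union_right _ hws)
  refine closed_set_false _ hc {z | (z : V) ∈ T} ?_
    (u := ⟨t, htc⟩) (v := ⟨w, hwc⟩) ht (fun hwT => hw (Finset.mem_union_left _ hwT))
  rintro ⟨x, hx⟩ hxT ⟨y, hy⟩ hadj
  have hxy : G.Adj x y := hadj
  have := hcl x hxT y hxy
  rcases Finset.mem_union.mp this with h | h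
  · exact h
  · exact absurd h hy

lemma cycle_struct {W : Type*} [Fintype W] (H : SimpleGraph W)
    (hcard : Fintype.card W = 4) (hna : ¬ H.IsAcyclic) :
    (∃ a b c : W, a ≠ b ∧ a ≠ c ∧ b ≠ c ∧ H.Adj a b ∧ H.Adj a c ∧ H.Adj b c) ∨
    (∃ a b c d : W, a ≠ b ∧ a ≠ c ∧ a ≠ d ∧ b ≠ c ∧ b ≠ d ∧ c ≠ d ∧
      H.Adj a b ∧ H.Adj b c ∧ H.Adj c d ∧ H.Adj d a ∧ ¬ H.Adj a c ∧ ¬ H.Adj b d) := by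
  classical
  rw [IsAcyclic] at hna
  push_neg at hna
  obtain ⟨u, c, hc⟩ := hna
  have h3 : 3 ≤ c.length := hc.three_le_length
  have hnd : c.support.tail.Nodup := hc.2
  have h4 : c.length ≤ 4 := by
    have := List.Nodup.length_le_card hnd
    have hl : c.support.tail.length = c.length := by
      have := c.length_support
      simp [List.length_tail, this]
    omega
  cases c with
  | nil => simp at h3
  | cons h1 p1 =>
    cases p1 with
    | nil => simp at h3
    | cons h2 p2 =>
      cases p2 with
      | nil => simp at h3
      | cons h3' p3 =>
        cases p3 with
        | nil =>
          simp only [Walk.support_cons, Walk.support_nil, List.tail_cons, List.nodup_cons,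
            List.mem_cons, List.mem_singleton, List.nodup_nil] at hnd
          rename_i x1 x2
          left
          refine ⟨u, x1, x2, ?_, ?_, ?_, h1, h3'.symm, h2⟩ <;> tauto
        | cons h4' p4 =>
          cases p4 with
          | nil =>
            rename_i x1 x2 x3;
            simp only [Walk.support_cons, Walk.support_nil, List.tail_cons, List.nodup_cons,
              List.mem_cons, List.mem_singleton, List.nodup_nil] at hnd
            have hx1u : x1 ≠ u := by tauto
            have hx2u : x2 ≠ u := by tauto
            have hx3u : x3 ≠ u := by tauto
            have h12 : x1 ≠ x2 := by tauto
            have h13 : x1 ≠ x3 := by tauto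
            have h23 : x2 ≠ x3 := by tauto
            by_cases hux2 : H.Adj u x2
            · left; exact ⟨u, x1, x2, hx1u.symm, hx2u.symm, h12, h1, hux2, h2⟩
            · by_cases hx13 : H.Adj x1 x3
              · left; exact ⟨x1, x2, x3, h12, h13, h23, h2, hx13, h3'⟩
              · right
                exact ⟨u, x1, x2, x3, hx1u.symm, hx2u.symm, hx3u.symm, h12, h13, h23,
                  h1, h2, h3', h4', hux2, hx13⟩
          | cons h5 p5 =>
            simp only [Walk.length_cons] at h4
            omega

lemma finset_eq_four {V : Type*} [DecidableEq V] {s : Finset V} (h4 : s.card = 4)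
    {a b c d : V} (ha : a ∈ s) (hb : b ∈ s) (hc : c ∈ s) (hd : d ∈ s)
    (hab : a ≠ b) (hac : a ≠ c) (had : a ≠ d) (hbc : b ≠ c) (hbd : b ≠ d) (hcd : c ≠ d) :
    s = {a, b, c, d} := by
  have hsub : ({a, b, c, d} : Finset V) ⊆ s := by
    intro z hz
    simp only [Finset.mem_insert, Finset.mem_singleton] at hz
    rcases hz with rfl | rfl | rfl | rfl <;> assumption
  have hcard : ({a, b, c, d} : Finset V).card = 4 := by
    rw [Finset.card_insert_of_notMem (by simp [hab, hac, had]),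
      Finset.card_insert_of_notMem (by simp [hbc, hbd]),
      Finset.card_insert_of_notMem (by simp [hcd]), Finset.card_singleton]
  exact (Finset.eq_of_subset_of_card_le hsub (by omega)).symm

lemma exists_fourth {V : Type*} [DecidableEq V] {s : Finset V} (h4 : s.card = 4)
    {p q r : V} (hp : p ∈ s) (hq : q ∈ s) (hr : r ∈ s)
    (hpq : p ≠ q) (hpr : p ≠ r) (hqr : q ≠ r) :
    ∃ x, x ∈ s ∧ x ≠ p ∧ x ≠ q ∧ x ≠ r ∧ s = {p, q, r, x} := by
  have hsub : ({p, q, r} : Finset V) ⊆ s := by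
    intro z hz
    simp only [Finset.mem_insert, Finset.mem_singleton] at hz
    rcases hz with rfl | rfl | rfl <;> assumption
  have hcard : ({p, q, r} : Finset V).card = 3 := by
    rw [Finset.card_insert_of_notMem (by simp [hpq, hpr]),
      Finset.card_insert_of_notMem (by simp [hqr]), Finset.card_singleton]
  obtain ⟨x, hxs, hxn⟩ := Finset.exists_of_ssubset (show ({p,q,r} : Finset V) ⊂ s from
    lt_of_le_of_ne hsub (fun h => by rw [h] at hcard; omega))
  simp only [Finset.mem_insert, Finset.mem_singleton, not_or] at hxn
  refine ⟨x, hxs, hxn.1, hxn.2.1, hxn.2.2, ?_⟩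
  exact finset_eq_four h4 hp hq hr hxs hpq hpr (Ne.symm hxn.1) hqr (Ne.symm hxn.2.1)
    (Ne.symm hxn.2.2)

end Helpers

section Apex

variable {V : Type*} [Fintype V] [DecidableEq V] {G : SimpleGraph V} [DecidableRel G.Adj]

lemma c4_apex {v a c x q r s : V}
    (hva : G.Adj v a) (hvc : G.Adj v c) (hnac : ¬ G.Adj a c) (hnvx : ¬ G.Adj v x)
    (hqm : q = v ∨ q = a ∨ q = c ∨ q = x)
    (hrm : r = v ∨ r = a ∨ r = c ∨ r = x)
    (hsm : s = v ∨ s = a ∨ s = c ∨ s = x)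
    (hvq : v ≠ q) (hvr : v ≠ r) (hvs : v ≠ s) (hqs : q ≠ s)
    (hpq : G.Adj v q) (hqr : G.Adj q r) (hrs : G.Adj r s) (hsp : G.Adj s v)
    (hnpr : ¬ G.Adj v r) : G.Adj x a ∧ G.Adj x c := by
  have hrx : r = x := by
    rcases hrm with rfl | rfl | rfl | rfl
    · exact absurd rfl hvr
    · exact absurd hva hnpr
    · exact absurd hvc hnpr
    · rfl
  subst hrx
  have hqac : q = a ∨ q = c := by
    rcases hqm with rfl | rfl | rfl | rfl
    · exact absurd rfl hvq
    · left; rfl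
    · right; rfl
    · exact absurd hpq hnvx
  have hsac : s = a ∨ s = c := by
    rcases hsm with rfl | rfl | rfl | rfl
    · exact absurd rfl hvs
    · left; rfl
    · right; rfl
    · exact absurd hsp.symm hnvx
  rcases hqac with rfl | rfl
  · rcases hsac with rfl | rfl
    · exact absurd rfl hqs
    · exact ⟨hqr.symm, hrs⟩
  · rcases hsac with rfl | rfl
    · exact ⟨hrs, hqr.symm⟩
    · exact absurd rfl hqs

lemma find_apex
    (v a b c d : V)
    (hsb : (∃ p q r : V, G.Adj b p ∧ G.Adj b q ∧ G.Adj b r ∧ p ≠ q ∧ p ≠ r ∧ q ≠ r ∧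
        G.Adj p q ∧ G.Adj p r ∧ G.Adj q r) ∨
      (∃ p q r s : V, G.Adj b p ∧ G.Adj b q ∧ G.Adj b r ∧ G.Adj b s ∧
        p ≠ q ∧ p ≠ r ∧ p ≠ s ∧ q ≠ r ∧ q ≠ s ∧ r ≠ s ∧
        G.Adj p q ∧ G.Adj q r ∧ G.Adj r s ∧ G.Adj s p ∧ ¬ G.Adj p r ∧ ¬ G.Adj q s))
    (hregb : G.degree b = 4)
    (hNv : G.neighborFinset v = {a, b, c, d})
    (hab : a ≠ b) (hac : a ≠ c) (had : a ≠ d) (hbc : b ≠ c) (hbd : b ≠ d) (hcd : c ≠ d)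
    (hadjab : G.Adj a b) (hadjbc : G.Adj b c) (hadjcd : G.Adj c d) (hadjda : G.Adj d a)
    (hnac : ¬ G.Adj a c) (hnbd : ¬ G.Adj b d) :
    ∃ x, G.neighborFinset b = {v, a, c, x} ∧ x ≠ v ∧ x ≠ a ∧ x ≠ b ∧ x ≠ c ∧ x ≠ d ∧
      G.Adj x a ∧ G.Adj x c ∧ G.Adj b x ∧ ¬ G.Adj v x := by
  have hva : G.Adj v a := by rw [← G.mem_neighborFinset _ _, hNv]; simp
  have hvb : G.Adj v b := by rw [← G.mem_neighborFinset _ _, hNv]; simp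
  have hvc : G.Adj v c := by rw [← G.mem_neighborFinset _ _, hNv]; simp
  have hvd : G.Adj v d := by rw [← G.mem_neighborFinset _ _, hNv]; simp
  have hvna : v ≠ a := fun h => G.irrefl (h ▸ hva)
  have hvnb : v ≠ b := fun h => G.irrefl (h ▸ hvb)
  have hvnc : v ≠ c := fun h => G.irrefl (h ▸ hvc)
  have hvnd : v ≠ d := fun h => G.irrefl (h ▸ hvd)
  have hmemv : v ∈ G.neighborFinset b := (G.mem_neighborFinset _ _).mpr hvb.symm
  have hmema : a ∈ G.neighborFinset b := (G.mem_neighborFinset _ _).mpr hadjab.symm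
  have hmemc : c ∈ G.neighborFinset b := (G.mem_neighborFinset _ _).mpr hadjbc
  obtain ⟨x, hxmem, hxv, hxa, hxc, hNb⟩ := exists_fourth (p := v) (q := a) (r := c)
    (by rw [card_neighborFinset_eq_degree]; exact hregb) hmemv hmema hmemc hvna hvnc hac
  have hbx : G.Adj b x := (G.mem_neighborFinset _ _).mp hxmem
  have hxb : x ≠ b := fun h => G.irrefl (h ▸ hbx)
  have hxd : x ≠ d := fun h => hnbd (h ▸ hbx)
  have hnvx : ¬ G.Adj v x := by
    intro h
    have : x ∈ G.neighborFinset v := (G.mem_neighborFinset _ _).mpr h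
    rw [hNv] at this
    simp only [Finset.mem_insert, Finset.mem_singleton] at this
    rcases this with rfl | rfl | rfl | rfl
    · exact hxa rfl
    · exact hxb rfl
    · exact hxc rfl
    · exact hxd rfl
  have hnca : ¬ G.Adj c a := fun h => hnac h.symm
  have hnxv : ¬ G.Adj x v := fun h => hnvx h.symm
  have memNb : ∀ z : V, G.Adj b z → (z = v ∨ z = a ∨ z = c ∨ z = x) := by
    intro z hz
    have : z ∈ G.neighborFinset b := (G.mem_neighborFinset _ _).mpr hz
    rw [hNb] at this
    simpa using this
  rcases hsb with ⟨p, q, r, hbp, hbq, hbr, hpq, hpr, hqr, hapq, hapr, haqr⟩ |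
    ⟨p, q, r, s, hbp, hbq, hbr, hbs, hpq, hpr, hps, hqr, hqs, hrs,
      hapq, haqr, hars, hasp, hnpr, hnqs⟩
  · -- triangle in N(b): impossible
    exfalso
    have hp' := memNb p hbp
    have hq' := memNb q hbq
    have hr' := memNb r hbr
    rcases hp' with rfl | rfl | rfl | rfl <;> rcases hq' with rfl | rfl | rfl | rfl <;>
      rcases hr' with rfl | rfl | rfl | rfl <;> tauto
  · -- C4 in N(b)
    have hp' := memNb p hbp
    have hq' := memNb q hbq
    have hr' := memNb r hbr
    have hs' := memNb s hbs
    have hNb' : G.neighborFinset b = {p, q, r, s} :=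
      finset_eq_four (by rw [card_neighborFinset_eq_degree]; exact hregb)
        ((G.mem_neighborFinset _ _).mpr hbp) ((G.mem_neighborFinset _ _).mpr hbq)
        ((G.mem_neighborFinset _ _).mpr hbr) ((G.mem_neighborFinset _ _).mpr hbs) hpq hpr hps hqr hqs hrs
    have hvmem : v = p ∨ v = q ∨ v = r ∨ v = s := by
      have := hmemv
      rw [hNb'] at this
      simpa using this
    have key : G.Adj x a ∧ G.Adj x c := by
      rcases hvmem with rfl | rfl | rfl | rfl
      · exact c4_apex hva hvc hnac hnvx hq' hr' hs' hpq hpr hps hqs hapq haqr hars hasp hnpr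
      · exact c4_apex hva hvc hnac hnvx hr' hs' hp' hqr hqs (Ne.symm hpq) (Ne.symm hpr)
          haqr hars hasp hapq hnqs
      · exact c4_apex hva hvc hnac hnvx hs' hp' hq' hrs (Ne.symm hpr) (Ne.symm hqr)
          (Ne.symm hqs) hars hasp hapq haqr (fun h => hnpr h.symm)
      · exact c4_apex hva hvc hnac hnvx hp' hq' hr' (Ne.symm hps) (Ne.symm hqs)
          (Ne.symm hrs) hpr hasp hapq haqr hars (fun h => hnqs h.symm)
    exact ⟨x, hNb, hxv, hxa, hxb, hxc, hxd, key.1, key.2, hbx, hnvx⟩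

end Apex

section K4

variable {V : Type*} [Fintype V] [DecidableEq V] {G : SimpleGraph V} [DecidableRel G.Adj]

lemma K4_unique (hconn : KConnected G 4) (h8 : 8 ≤ Fintype.card V)
    (hreg : ∀ w : V, G.degree w = 4)
    {s t : Finset V} (hs4 : s.card = 4)
    (hsadj : ∀ x ∈ s, ∀ y ∈ s, x ≠ y → G.Adj x y)
    (ht4 : t.card = 4) (htadj : ∀ x ∈ t, ∀ y ∈ t, x ≠ y → G.Adj x y)
    {u : V} (hus : u ∈ s) (hut : u ∈ t) : s = t := by
  by_contra hne
  have hsn : s.erase u ⊆ G.neighborFinset u := by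
    intro z hz
    exact (G.mem_neighborFinset _ _).mpr
      (hsadj u hus z (Finset.mem_of_mem_erase hz) (Ne.symm (Finset.ne_of_mem_erase hz)))
  have htn : t.erase u ⊆ G.neighborFinset u := by
    intro z hz
    exact (G.mem_neighborFinset _ _).mpr
      (htadj u hut z (Finset.mem_of_mem_erase hz) (Ne.symm (Finset.ne_of_mem_erase hz)))
  have hscard : (s.erase u).card = 3 := by rw [Finset.card_erase_of_mem hus, hs4]
  have htcard : (t.erase u).card = 3 := by rw [Finset.card_erase_of_mem hut, ht4]
  have hNcard : (G.neighborFinset u).card = 4 := by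
    rw [card_neighborFinset_eq_degree]; exact hreg u
  have hucard : ((s.erase u) ∪ (t.erase u)).card ≤ 4 := by
    calc ((s.erase u) ∪ (t.erase u)).card ≤ (G.neighborFinset u).card :=
          Finset.card_le_card (Finset.union_subset hsn htn)
      _ = 4 := hNcard
  have hicard2 : 2 ≤ ((s.erase u) ∩ (t.erase u)).card := by
    have := Finset.card_union_add_card_inter (s.erase u) (t.erase u)
    omega
  have hine : s.erase u ≠ t.erase u := by
    intro h
    apply hne
    rw [← Finset.insert_erase hus, ← Finset.insert_erase hut, h]
  have hicard : ((s.erase u) ∩ (t.erase u)).card = 2 := by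
    rcases Nat.lt_or_ge ((s.erase u) ∩ (t.erase u)).card 3 with h | h
    · omega
    · exfalso
      have h1 : (s.erase u) ∩ (t.erase u) = s.erase u :=
        Finset.eq_of_subset_of_card_le Finset.inter_subset_left (by omega)
      have h2 : (s.erase u) ∩ (t.erase u) = t.erase u :=
        Finset.eq_of_subset_of_card_le Finset.inter_subset_right (by omega)
      exact hine (h1 ▸ h2)
  obtain ⟨pp, qq, hppqq, hinter⟩ := Finset.card_eq_two.mp hicard
  have hsd : ((s.erase u) \ ((s.erase u) ∩ (t.erase u))).card = 1 := by
    rw [Finset.card_sdiff_of_subset Finset.inter_subset_left]; omega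
  have htd : ((t.erase u) \ ((s.erase u) ∩ (t.erase u))).card = 1 := by
    rw [Finset.card_sdiff_of_subset Finset.inter_subset_right]; omega
  obtain ⟨rr, hrr⟩ := Finset.card_eq_one.mp hsd
  obtain ⟨rr', hrr'⟩ := Finset.card_eq_one.mp htd
  have hrrmem : rr ∈ s.erase u ∧ rr ∉ (s.erase u) ∩ (t.erase u) := by
    have : rr ∈ (s.erase u) \ ((s.erase u) ∩ (t.erase u)) := by rw [hrr]; simp
    exact ⟨(Finset.mem_sdiff.mp this).1, (Finset.mem_sdiff.mp this).2⟩
  have hrrmem' : rr' ∈ t.erase u ∧ rr' ∉ (s.erase u) ∩ (t.erase u) := by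
    have : rr' ∈ (t.erase u) \ ((s.erase u) ∩ (t.erase u)) := by rw [hrr']; simp
    exact ⟨(Finset.mem_sdiff.mp this).1, (Finset.mem_sdiff.mp this).2⟩
  -- memberships
  have hpps : pp ∈ s.erase u := by
    have : pp ∈ (s.erase u) ∩ (t.erase u) := by rw [hinter]; simp
    exact Finset.mem_of_mem_inter_left this
  have hppt : pp ∈ t.erase u := by
    have : pp ∈ (s.erase u) ∩ (t.erase u) := by rw [hinter]; simp
    exact Finset.mem_of_mem_inter_right this
  have hqqs : qq ∈ s.erase u := by
    have : qq ∈ (s.erase u) ∩ (t.erase u) := by rw [hinter]; simp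
    exact Finset.mem_of_mem_inter_left this
  have hqqt : qq ∈ t.erase u := by
    have : qq ∈ (s.erase u) ∩ (t.erase u) := by rw [hinter]; simp
    exact Finset.mem_of_mem_inter_right this
  have hrrnt : rr ∉ t.erase u := by
    intro h
    exact hrrmem.2 (Finset.mem_inter.mpr ⟨hrrmem.1, h⟩)
  have hrrns : rr' ∉ s.erase u := by
    intro h
    exact hrrmem'.2 (Finset.mem_inter.mpr ⟨h, hrrmem'.1⟩)
  have hrrne : rr ≠ rr' := by
    intro h
    exact hrrnt (h ▸ hrrmem'.1)
  -- distinctness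
  have hppu : pp ≠ u := Finset.ne_of_mem_erase hpps
  have hqqu : qq ≠ u := Finset.ne_of_mem_erase hqqs
  have hrru : rr ≠ u := Finset.ne_of_mem_erase hrrmem.1
  have hrru' : rr' ≠ u := Finset.ne_of_mem_erase hrrmem'.1
  have hrrpp : rr ≠ pp := by
    intro h
    apply hrrmem.2
    rw [hinter, h]; simp
  have hrrqq : rr ≠ qq := by
    intro h
    apply hrrmem.2
    rw [hinter, h]; simp
  have hrrpp' : rr' ≠ pp := by
    intro h
    apply hrrmem'.2
    rw [hinter, h]; simp
  have hrrqq' : rr' ≠ qq := by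
    intro h
    apply hrrmem'.2
    rw [hinter, h]; simp
  -- s-memberships (without erase)
  have hpps' : pp ∈ s := Finset.mem_of_mem_erase hpps
  have hppt' : pp ∈ t := Finset.mem_of_mem_erase hppt
  have hqqs' : qq ∈ s := Finset.mem_of_mem_erase hqqs
  have hqqt' : qq ∈ t := Finset.mem_of_mem_erase hqqt
  have hrrs' : rr ∈ s := Finset.mem_of_mem_erase hrrmem.1
  have hrrt' : rr' ∈ t := Finset.mem_of_mem_erase hrrmem'.1
  -- adjacency facts
  have haupp : G.Adj u pp := hsadj u hus pp hpps' (Ne.symm hppu)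
  have hauqq : G.Adj u qq := hsadj u hus qq hqqs' (Ne.symm hqqu)
  have haurr : G.Adj u rr := hsadj u hus rr hrrs' (Ne.symm hrru)
  have haurr' : G.Adj u rr' := htadj u hut rr' hrrt' (Ne.symm hrru')
  have happqq : G.Adj pp qq := hsadj pp hpps' qq hqqs' (fun h => by simp [h] at hppqq)
  have happrr : G.Adj pp rr := hsadj pp hpps' rr hrrs' (Ne.symm hrrpp)
  have happrr' : G.Adj pp rr' := htadj pp hppt' rr' hrrt' (Ne.symm hrrpp')
  have haqqrr : G.Adj qq rr := hsadj qq hqqs' rr hrrs' (Ne.symm hrrqq)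
  have haqqrr' : G.Adj qq rr' := htadj qq hqqt' rr' hrrt' (Ne.symm hrrqq')
  -- neighbor finsets
  have hNu : G.neighborFinset u = {pp, qq, rr, rr'} :=
    finset_eq_four hNcard ((G.mem_neighborFinset _ _).mpr haupp)
      ((G.mem_neighborFinset _ _).mpr hauqq) ((G.mem_neighborFinset _ _).mpr haurr)
      ((G.mem_neighborFinset _ _).mpr haurr') hppqq (Ne.symm hrrpp) (Ne.symm hrrpp')
      (Ne.symm hrrqq) (Ne.symm hrrqq') hrrne
  have hNpp : G.neighborFinset pp = {u, qq, rr, rr'} :=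
    finset_eq_four (by rw [card_neighborFinset_eq_degree]; exact hreg pp)
      ((G.mem_neighborFinset _ _).mpr haupp.symm) ((G.mem_neighborFinset _ _).mpr happqq)
      ((G.mem_neighborFinset _ _).mpr happrr) ((G.mem_neighborFinset _ _).mpr happrr')
      (Ne.symm hqqu) (Ne.symm hrru) (Ne.symm hrru') (Ne.symm hrrqq) (Ne.symm hrrqq') hrrne
  have hNqq : G.neighborFinset qq = {u, pp, rr, rr'} :=
    finset_eq_four (by rw [card_neighborFinset_eq_degree]; exact hreg qq)
      ((G.mem_neighborFinset _ _).mpr hauqq.symm) ((G.mem_neighborFinset _ _).mpr happqq.symm)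
      ((G.mem_neighborFinset _ _).mpr haqqrr) ((G.mem_neighborFinset _ _).mpr haqqrr')
      (Ne.symm hppu) (Ne.symm hrru) (Ne.symm hrru') (Ne.symm hrrpp) (Ne.symm hrrpp') hrrne
  by_cases hrrr : G.Adj rr rr'
  · -- K5 case: {u, pp, qq, rr, rr'} is closed
    have hNrr : G.neighborFinset rr = {u, pp, qq, rr'} :=
      finset_eq_four (by rw [card_neighborFinset_eq_degree]; exact hreg rr)
        ((G.mem_neighborFinset _ _).mpr haurr.symm) ((G.mem_neighborFinset _ _).mpr happrr.symm)
        ((G.mem_neighborFinset _ _).mpr haqqrr.symm) ((G.mem_neighborFinset _ _).mpr hrrr)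
        (Ne.symm hppu) (Ne.symm hqqu) (Ne.symm hrru') hppqq (Ne.symm hrrpp') (Ne.symm hrrqq')
    have hNrr' : G.neighborFinset rr' = {u, pp, qq, rr} :=
      finset_eq_four (by rw [card_neighborFinset_eq_degree]; exact hreg rr')
        ((G.mem_neighborFinset _ _).mpr haurr'.symm) ((G.mem_neighborFinset _ _).mpr happrr'.symm)
        ((G.mem_neighborFinset _ _).mpr haqqrr'.symm) ((G.mem_neighborFinset _ _).mpr hrrr.symm)
        (Ne.symm hppu) (Ne.symm hqqu) (Ne.symm hrru) hppqq (Ne.symm hrrpp) (Ne.symm hrrqq)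
    refine cut_lemma hconn ∅ {u, pp, qq, rr, rr'} (by simp) (by simp) ⟨u, by simp⟩ ?_ ?_
    · calc ({u, pp, qq, rr, rr'} ∪ ∅ : Finset V).card ≤ 5 := by
            rw [Finset.union_empty]
            apply le_trans (Finset.card_insert_le _ _)
            apply Nat.succ_le_succ
            apply le_trans (Finset.card_insert_le _ _)
            apply Nat.succ_le_succ
            apply le_trans (Finset.card_insert_le _ _)
            apply Nat.succ_le_succ
            exact le_trans (Finset.card_insert_le _ _) (by simp)
        _ < Fintype.card V := by omega
    · intro w hw z hadj
      have hz : z ∈ G.neighborFinset w := (G.mem_neighborFinset _ _).mpr hadj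
      rw [Finset.union_empty]
      simp only [Finset.mem_insert, Finset.mem_singleton] at hw
      rcases hw with rfl | rfl | rfl | rfl | rfl
      · rw [hNu] at hz; simp only [Finset.mem_insert, Finset.mem_singleton] at hz ⊢; tauto
      · rw [hNpp] at hz; simp only [Finset.mem_insert, Finset.mem_singleton] at hz ⊢; tauto
      · rw [hNqq] at hz; simp only [Finset.mem_insert, Finset.mem_singleton] at hz ⊢; tauto
      · rw [hNrr] at hz; simp only [Finset.mem_insert, Finset.mem_singleton] at hz ⊢; tauto
      · rw [hNrr'] at hz; simp only [Finset.mem_insert, Finset.mem_singleton] at hz ⊢; tauto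
  · -- cut {rr, rr'} separates {u, pp, qq}
    refine cut_lemma hconn {rr, rr'} {u, pp, qq} ?_ ?_ ⟨u, by simp⟩ ?_ ?_
    · have : ({rr, rr'} : Finset V).card ≤ 2 := le_trans (Finset.card_insert_le _ _) (by simp)
      omega
    · intro w hw
      simp only [Finset.mem_insert, Finset.mem_singleton] at hw ⊢
      rcases hw with rfl | rfl | rfl
      · push_neg; exact ⟨Ne.symm hrru, Ne.symm hrru'⟩
      · push_neg; exact ⟨Ne.symm hrrpp, Ne.symm hrrpp'⟩
      · push_neg; exact ⟨Ne.symm hrrqq, Ne.symm hrrqq'⟩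
    · calc (({u, pp, qq} ∪ {rr, rr'} : Finset V)).card ≤ ({u, pp, qq} : Finset V).card + ({rr, rr'} : Finset V).card :=
            Finset.card_union_le _ _
        _ ≤ 5 := by
            have h1 : ({u, pp, qq} : Finset V).card ≤ 3 := by
              apply le_trans (Finset.card_insert_le _ _)
              apply Nat.succ_le_succ
              exact le_trans (Finset.card_insert_le _ _) (by simp)
            have h2 : ({rr, rr'} : Finset V).card ≤ 2 := by
              exact le_trans (Finset.card_insert_le _ _) (by simp)
            omega
        _ < Fintype.card V := by omega
    · intro w hw z hadj
      have hz : z ∈ G.neighborFinset w := (G.mem_neighborFinset _ _).mpr hadj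
      simp only [Finset.mem_insert, Finset.mem_singleton] at hw
      rcases hw with rfl | rfl | rfl
      · rw [hNu] at hz
        simp only [Finset.mem_union, Finset.mem_insert, Finset.mem_singleton] at hz ⊢; tauto
      · rw [hNpp] at hz
        simp only [Finset.mem_union, Finset.mem_insert, Finset.mem_singleton] at hz ⊢; tauto
      · rw [hNqq] at hz
        simp only [Finset.mem_union, Finset.mem_insert, Finset.mem_singleton] at hz ⊢; tauto

end K4

theorem stmt_1 {V : Type*} [Fintype V] (G : SimpleGraph V) (n : ℕ)
    (hn : Fintype.card V = n) (h8 : 8 ≤ n)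
    (hconn : KConnected G 4) (hloc : LocallyNonforesty G) :
    (if n % 4 = 0 then 2 * n else 2 * n + 1) ≤ G.edgeSet.ncard := by
  classical
  have hdeg : ∀ v : V, 4 ≤ G.degree v := by
    intro v
    by_contra h
    push_neg at h
    refine cut_lemma hconn (G.neighborFinset v) {v} ?_ ?_ ⟨v, Finset.mem_singleton_self v⟩ ?_ ?_
    · rwa [card_neighborFinset_eq_degree]
    · intro t ht
      rw [Finset.mem_singleton] at ht
      subst ht
      exact G.notMem_neighborFinset_self _
    · have h1 : ({v} ∪ G.neighborFinset v).card ≤ 1 + G.degree v := by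
        apply le_trans (Finset.card_union_le _ _)
        simp
      omega
    · intro t ht z hadj
      rw [Finset.mem_singleton] at ht
      subst ht
      exact Finset.mem_union_right _ ((G.mem_neighborFinset _ _).mpr hadj)
  have hEcard : G.edgeSet.ncard = G.edgeFinset.card := by
    rw [Set.ncard_eq_toFinset_card']
    congr 1
  have hsum := G.sum_degrees_eq_twice_card_edges
  have hconst : ∑ _v : V, (4 : ℕ) = 4 * n := by
    rw [Finset.sum_const, Finset.card_univ, hn, smul_eq_mul, mul_comm]
  have h4n : 4 * n ≤ ∑ v : V, G.degree v := by
    rw [← hconst]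
    exact Finset.sum_le_sum (fun i _ => hdeg i)
  have h2n : 2 * n ≤ G.edgeFinset.card := by omega
  rw [hEcard]
  by_cases hmod : n % 4 = 0
  · rw [if_pos hmod]; exact h2n
  rw [if_neg hmod]
  rcases Nat.lt_or_ge (2 * n) G.edgeFinset.card with hlt | hge
  · omega
  exfalso
  have hEeq : G.edgeFinset.card = 2 * n := le_antisymm hge h2n
  have hreg : ∀ v : V, G.degree v = 4 := by
    by_contra hg
    push_neg at hg
    obtain ⟨w, hw⟩ := hg
    have hw4 : 4 < G.degree w := lt_of_le_of_ne (hdeg w) (Ne.symm hw)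
    have hlt2 : ∑ _v : V, (4 : ℕ) < ∑ v : V, G.degree v :=
      Finset.sum_lt_sum (fun i _ => hdeg i) ⟨w, Finset.mem_univ w, hw4⟩
    omega
  have h8' : 8 ≤ Fintype.card V := by omega
  have hstruct : ∀ w : V,
      (∃ p q r : V, G.Adj w p ∧ G.Adj w q ∧ G.Adj w r ∧ p ≠ q ∧ p ≠ r ∧ q ≠ r ∧
        G.Adj p q ∧ G.Adj p r ∧ G.Adj q r) ∨
      (∃ p q r s : V, G.Adj w p ∧ G.Adj w q ∧ G.Adj w r ∧ G.Adj w s ∧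
        p ≠ q ∧ p ≠ r ∧ p ≠ s ∧ q ≠ r ∧ q ≠ s ∧ r ≠ s ∧
        G.Adj p q ∧ G.Adj q r ∧ G.Adj r s ∧ G.Adj s p ∧ ¬ G.Adj p r ∧ ¬ G.Adj q s) := by
    intro w
    have hcard : Fintype.card (G.neighborSet w) = 4 := by
      rw [card_neighborSet_eq_degree]; exact hreg w
    rcases cycle_struct _ hcard (hloc w) with
      ⟨a, b, c, hab, hac, hbc, h1, h2, h3⟩ |
      ⟨a, b, c, d, hab, hac, had, hbc, hbd, hcd, h1, h2, h3, h4, h5, h6⟩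
    · left
      exact ⟨a, b, c, a.2, b.2, c.2, Subtype.coe_injective.ne hab,
        Subtype.coe_injective.ne hac, Subtype.coe_injective.ne hbc, h1, h2, h3⟩
    · right
      exact ⟨a, b, c, d, a.2, b.2, c.2, d.2, Subtype.coe_injective.ne hab,
        Subtype.coe_injective.ne hac, Subtype.coe_injective.ne had,
        Subtype.coe_injective.ne hbc, Subtype.coe_injective.ne hbd,
        Subtype.coe_injective.ne hcd, h1, h2, h3, h4, h5, h6⟩
  by_cases htri : ∀ w : V, ∃ p q r : V, G.Adj w p ∧ G.Adj w q ∧ G.Adj w r ∧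
      p ≠ q ∧ p ≠ r ∧ q ≠ r ∧ G.Adj p q ∧ G.Adj p r ∧ G.Adj q r
  · -- every vertex lies in a K4 : 4 ∣ n
    choose p q r hp hq hr hpq hpr hqr hapq hapr haqr using htri
    set κ : V → Finset V := fun v => {v, p v, q v, r v} with hκdef
    have hκmem : ∀ v, v ∈ κ v := by intro v; simp [hκdef]
    have hvp : ∀ v, v ≠ p v := fun v h => G.irrefl (show G.Adj v v by nth_rewrite 2 [h]; exact hp v)
    have hvq : ∀ v, v ≠ q v := fun v h => G.irrefl (show G.Adj v v by nth_rewrite 2 [h]; exact hq v)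
    have hvr : ∀ v, v ≠ r v := fun v h => G.irrefl (show G.Adj v v by nth_rewrite 2 [h]; exact hr v)
    have hκ4 : ∀ v, (κ v).card = 4 := by
      intro v
      rw [hκdef]
      rw [Finset.card_insert_of_notMem (by simp [hvp v, hvq v, hvr v]),
        Finset.card_insert_of_notMem (by simp [hpq v, hpr v]),
        Finset.card_insert_of_notMem (by simp [hqr v]), Finset.card_singleton]
    have hκadj : ∀ v, ∀ x ∈ κ v, ∀ y ∈ κ v, x ≠ y → G.Adj x y := by
      intro v x hx y hy hxy
      have e1 := hp v; have e2 := hq v; have e3 := hr v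
      have e4 := hapq v; have e5 := hapr v; have e6 := haqr v
      have e1' := e1.symm; have e2' := e2.symm; have e3' := e3.symm
      have e4' := e4.symm; have e5' := e5.symm; have e6' := e6.symm
      simp only [hκdef, Finset.mem_insert, Finset.mem_singleton] at hx hy
      rcases hx with rfl | rfl | rfl | rfl <;> rcases hy with rfl | rfl | rfl | rfl <;>
        first | exact absurd rfl hxy | assumption
    have hκeq : ∀ v, ∀ u ∈ κ v, κ u = κ v := fun v u hu =>
      K4_unique hconn h8' hreg (hκ4 u) (hκadj u) (hκ4 v) (hκadj v) (hκmem u) hu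
    have hcount := Finset.card_eq_sum_card_fiberwise
      (f := κ) (s := Finset.univ) (t := Finset.univ.image κ)
      (fun x _ => Finset.mem_image_of_mem κ (Finset.mem_univ x))
    have hfiber : ∀ sF ∈ Finset.univ.image κ,
        (Finset.univ.filter (fun z => κ z = sF)).card = 4 := by
      intro sF hsF
      obtain ⟨v, _, rfl⟩ := Finset.mem_image.mp hsF
      have hfil : Finset.univ.filter (fun z => κ z = κ v) = κ v := by
        ext z
        simp only [Finset.mem_filter, Finset.mem_univ, true_and]
        constructor
        · intro h; rw [← h]; exact hκmem z
        · intro h; exact hκeq v z h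
      rw [hfil]; exact hκ4 v
    have hcount2 : Fintype.card V = (Finset.univ.image κ).card * 4 := by
      rw [Finset.card_univ] at hcount
      rw [hcount, Finset.sum_congr rfl hfiber, Finset.sum_const, smul_eq_mul]
    omega
  · -- a wheel vertex exists : octahedron, contradiction
    rw [not_forall] at htri
    obtain ⟨w, hw⟩ := htri
    rcases hstruct w with htriw | hc4
    · exact hw htriw
    obtain ⟨a, b, c, d, hwa, hwb, hwc, hwd, hab, hac, had, hbc, hbd, hcd,
      hadjab, hadjbc, hadjcd, hadjda, hnac, hnbd⟩ := hc4
    have hNw : G.neighborFinset w = {a, b, c, d} :=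
      finset_eq_four (by rw [card_neighborFinset_eq_degree]; exact hreg w)
        ((G.mem_neighborFinset _ _).mpr hwa) ((G.mem_neighborFinset _ _).mpr hwb)
        ((G.mem_neighborFinset _ _).mpr hwc) ((G.mem_neighborFinset _ _).mpr hwd)
        hab hac had hbc hbd hcd
    obtain ⟨x, hNb, hxw, hxa, hxb, hxc, hxd, hxa', hxc', hbx, hnwx⟩ :=
      find_apex w a b c d (hstruct b) (hreg b) hNw hab hac had hbc hbd hcd
        hadjab hadjbc hadjcd hadjda hnac hnbd
    have hNw' : G.neighborFinset w = {a, d, c, b} := by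
      rw [hNw]; ext z
      simp only [Finset.mem_insert, Finset.mem_singleton]; tauto
    obtain ⟨x', hNd, hx'w, hx'a, hx'd, hx'c, hx'b, hx'a', hx'c', hdx', hnwx'⟩ :=
      find_apex w a d c b (hstruct d) (hreg d) hNw' had hac hab (Ne.symm hcd)
        (Ne.symm hbd) (Ne.symm hbc) hadjda.symm hadjcd.symm hadjbc.symm hadjab.symm
        hnac (fun h => hnbd h.symm)
    have hwna : w ≠ a := fun h => G.irrefl (h ▸ hwa)
    have hwnb : w ≠ b := fun h => G.irrefl (h ▸ hwb)
    have hwnc : w ≠ c := fun h => G.irrefl (h ▸ hwc)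
    have hwnd : w ≠ d := fun h => G.irrefl (h ▸ hwd)
    have hNa : G.neighborFinset a = {w, b, d, x} :=
      finset_eq_four (by rw [card_neighborFinset_eq_degree]; exact hreg a)
        ((G.mem_neighborFinset _ _).mpr hwa.symm) ((G.mem_neighborFinset _ _).mpr hadjab)
        ((G.mem_neighborFinset _ _).mpr hadjda.symm) ((G.mem_neighborFinset _ _).mpr hxa'.symm)
        hwnb hwnd (Ne.symm hxw) hbd (Ne.symm hxb) (Ne.symm hxd)
    have hx'x : x' = x := by
      have hmem : x' ∈ G.neighborFinset a := (G.mem_neighborFinset _ _).mpr hx'a'.symm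
      rw [hNa] at hmem
      simp only [Finset.mem_insert, Finset.mem_singleton] at hmem
      rcases hmem with rfl | rfl | rfl | h
      · exact absurd rfl hx'w
      · exact absurd rfl hx'b
      · exact absurd rfl hx'd
      · exact h
    rw [hx'x] at hNd hdx'
    have hNc : G.neighborFinset c = {w, b, d, x} :=
      finset_eq_four (by rw [card_neighborFinset_eq_degree]; exact hreg c)
        ((G.mem_neighborFinset _ _).mpr hwc.symm) ((G.mem_neighborFinset _ _).mpr hadjbc.symm)
        ((G.mem_neighborFinset _ _).mpr hadjcd) ((G.mem_neighborFinset _ _).mpr hxc'.symm)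
        hwnb hwnd (Ne.symm hxw) hbd (Ne.symm hxb) (Ne.symm hxd)
    have hNx : G.neighborFinset x = {a, b, c, d} :=
      finset_eq_four (by rw [card_neighborFinset_eq_degree]; exact hreg x)
        ((G.mem_neighborFinset _ _).mpr hxa') ((G.mem_neighborFinset _ _).mpr hbx.symm)
        ((G.mem_neighborFinset _ _).mpr hxc') ((G.mem_neighborFinset _ _).mpr hdx'.symm)
        hab hac had hbc hbd hcd
    refine cut_lemma hconn ∅ {w, a, b, c, d, x} (by simp) (by simp)
      ⟨w, by simp⟩ ?_ ?_
    · rw [Finset.union_empty]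
      have hle : ({w, a, b, c, d, x} : Finset V).card ≤ 6 := by
        apply le_trans (Finset.card_insert_le _ _)
        apply Nat.succ_le_succ
        apply le_trans (Finset.card_insert_le _ _)
        apply Nat.succ_le_succ
        apply le_trans (Finset.card_insert_le _ _)
        apply Nat.succ_le_succ
        apply le_trans (Finset.card_insert_le _ _)
        apply Nat.succ_le_succ
        exact le_trans (Finset.card_insert_le _ _) (by simp)
      omega
    · intro t ht z hadj
      rw [Finset.union_empty]
      have hz : z ∈ G.neighborFinset t := (G.mem_neighborFinset _ _).mpr hadj
      simp only [Finset.mem_insert, Finset.mem_singleton] at ht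
      rcases ht with rfl | rfl | rfl | rfl | rfl | rfl
      · rw [hNw] at hz; simp only [Finset.mem_insert, Finset.mem_singleton] at hz ⊢; tauto
      · rw [hNa] at hz; simp only [Finset.mem_insert, Finset.mem_singleton] at hz ⊢; tauto
      · rw [hNb] at hz; simp only [Finset.mem_insert, Finset.mem_singleton] at hz ⊢; tauto
      · rw [hNc] at hz; simp only [Finset.mem_insert, Finset.mem_singleton] at hz ⊢; tauto
      · rw [hNd] at hz; simp only [Finset.mem_insert, Finset.mem_singleton] at hz ⊢; tauto
      · rw [hNx] at hz; simp only [Finset.mem_insert, Finset.mem_singleton] at hz ⊢; tauto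
end

section
/- Let G be a 4-connected, 4-regular, locally nonforesty graph of order n ≥ 8. Then for every vertex v of G, the subgraph induced by the neighborhood N(v) is isomorphic to C_3 + K_1 (a triangle plus an isolated vertex). In particular, n ≡ 0 (mod 4). -/
open SimpleGraph

section Helpers

lemma small_cycle {α : Type*} [Fintype α] (H : SimpleGraph α) (hcard : Fintype.card α ≤ 4)
    (h : ¬ H.IsAcyclic) :
    (∃ x y z : α, x ≠ y ∧ x ≠ z ∧ y ≠ z ∧ H.Adj x y ∧ H.Adj x z ∧ H.Adj y z) ∨
    (∃ x y z w : α, x ≠ y ∧ x ≠ z ∧ x ≠ w ∧ y ≠ z ∧ y ≠ w ∧ z ≠ w ∧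
      H.Adj x y ∧ H.Adj y z ∧ H.Adj z w ∧ H.Adj w x) := by
  unfold SimpleGraph.IsAcyclic at h
  push_neg at h
  obtain ⟨u, c, hc⟩ := h
  have h3 : 3 ≤ c.length := hc.three_le_length
  have hnd : c.support.tail.Nodup := hc.support_nodup
  have h4 : c.length ≤ 4 := by
    have := hnd.length_le_card
    simpa [SimpleGraph.Walk.length_support] using this.trans hcard
  clear hc
  cases c with
  | nil => simp at h3
  | cons h1 p =>
    cases p with
    | nil => simp at h3
    | cons h2 p =>
      cases p with
      | nil => simp at h3
      | cons h3' p =>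
        cases p with
        | nil =>
          simp only [Walk.support_cons, Walk.support_nil, List.tail_cons, List.nodup_cons,
            List.mem_cons, List.mem_singleton, List.not_mem_nil, List.nodup_nil, or_false,
            not_or, and_true] at hnd
          left
          refine ⟨u, _, _, ?_, ?_, ?_, h1, h3'.symm, h2⟩ <;> tauto
        | cons h4' p =>
          cases p with
          | nil =>
            simp only [Walk.support_cons, Walk.support_nil, List.tail_cons, List.nodup_cons,
              List.mem_cons, List.mem_singleton, List.not_mem_nil, List.nodup_nil, or_false,
              not_or, and_true] at hnd
            right
            refine ⟨u, _, _, _, ?_, ?_, ?_, ?_, ?_, ?_, h1, h2, h3', h4'⟩ <;> tauto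
          | cons h5' p => simp only [Walk.length_cons] at h4; omega

lemma exists_fourth_s3 {V : Type*} [Fintype V] {s : Set V} (hs : s.ncard = 4)
    {x y z : V} (hx : x ∈ s) (hy : y ∈ s) (hz : z ∈ s)
    (hxy : x ≠ y) (hxz : x ≠ z) (hyz : y ≠ z) :
    ∃ w, w ≠ x ∧ w ≠ y ∧ w ≠ z ∧ s = {x, y, z, w} := by
  classical
  rw [Set.ncard_eq_toFinset_card'] at hs
  have hsub : ({x, y, z} : Finset V) ⊆ s.toFinset := by
    intro u hu
    simp only [Finset.mem_insert, Finset.mem_singleton] at hu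
    rcases hu with rfl | rfl | rfl <;> simp [Set.mem_toFinset, *]
  have hcard3 : ({x, y, z} : Finset V).card = 3 := by
    rw [Finset.card_insert_of_notMem (by simp [hxy, hxz]),
      Finset.card_insert_of_notMem (by simp [hyz]), Finset.card_singleton]
  have h1 : (s.toFinset \ {x, y, z}).card = 1 := by
    rw [Finset.card_sdiff_of_subset hsub, hs, hcard3]
  obtain ⟨w, hw⟩ := Finset.card_eq_one.mp h1
  have hwmem : w ∈ s.toFinset \ ({x, y, z} : Finset V) := hw ▸ Finset.mem_singleton_self w
  simp only [Finset.mem_sdiff, Set.mem_toFinset, Finset.mem_insert, Finset.mem_singleton,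
    not_or] at hwmem
  refine ⟨w, hwmem.2.1, hwmem.2.2.1, hwmem.2.2.2, ?_⟩
  have h5 : s.toFinset = ({x, y, z} : Finset V) ∪ (s.toFinset \ {x, y, z}) := by
    rw [Finset.union_sdiff_of_subset hsub]
  rw [hw] at h5
  have h6 := congrArg (fun t : Finset V => (↑t : Set V)) h5
  ext u
  have hu := (Set.ext_iff.mp (by simpa using h6)) u
  simp only [Set.mem_insert_iff, Set.mem_singleton_iff] at *
  tauto

lemma set_eq_four {V : Type*} [Fintype V] {s : Set V} (hs : s.ncard = 4)
    {x y z w : V} (hx : x ∈ s) (hy : y ∈ s) (hz : z ∈ s) (hw : w ∈ s)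
    (hxy : x ≠ y) (hxz : x ≠ z) (hxw : x ≠ w) (hyz : y ≠ z) (hyw : y ≠ w) (hzw : z ≠ w) :
    s = {x, y, z, w} := by
  obtain ⟨w', h1, h2, h3, h4⟩ := exists_fourth_s3 hs hx hy hz hxy hxz hyz
  have : w = w' := by
    have := h4 ▸ hw
    simp only [Set.mem_insert_iff, Set.mem_singleton_iff] at this
    tauto
  rw [h4, this]

lemma exists_pair {V : Type*} [Fintype V] {s : Set V} (hs : s.ncard = 4)
    {x y : V} (hx : x ∈ s) (hy : y ∈ s) (hxy : x ≠ y) :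
    ∃ p q, p ≠ q ∧ p ≠ x ∧ p ≠ y ∧ q ≠ x ∧ q ≠ y ∧ s = {x, y, p, q} := by
  classical
  obtain ⟨p, hp, hpx, hpy⟩ : ∃ p ∈ s, p ≠ x ∧ p ≠ y := by
    by_contra hcon
    push_neg at hcon
    have hsub : s ⊆ {x, y} := by
      intro u hu
      by_cases h1 : u = x
      · exact Or.inl h1
      · exact Or.inr (hcon u hu h1)
    have := Set.ncard_le_ncard hsub (Set.toFinite _)
    have h2 : ({x, y} : Set V).ncard ≤ 2 := by
      refine le_trans (Set.ncard_insert_le _ _) ?_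
      simp
    omega
  obtain ⟨q, h1, h2, h3, h4⟩ := exists_fourth_s3 hs hx hy hp hxy (Ne.symm hpx) (Ne.symm hpy)
  exact ⟨p, q, fun e => h3 e.symm, hpx, hpy, h1, h2, h4⟩

lemma walk_closed {W : Type*} {H : SimpleGraph W} {S : Set W}
    (hcl : ∀ a ∈ S, ∀ b, H.Adj a b → b ∈ S) :
    ∀ {a b : W}, H.Walk a b → a ∈ S → b ∈ S := by
  intro a b p
  induction p with
  | nil => exact id
  | cons h q ih => exact fun ha => ih (hcl _ ha _ h)

lemma cut_contra {V : Type*} [Fintype V] {G : SimpleGraph V} (hconn : KConnected G 4)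
    (T : Finset V) (hT : T.card < 4) (S : Set V)
    (hST : ∀ a ∈ S, a ∉ T)
    (hcl : ∀ a ∈ S, ∀ b, G.Adj a b → b ∈ S ∨ b ∈ T)
    {v u : V} (hv : v ∈ S) (hu : u ∉ S) (huT : u ∉ T) : False := by
  have hc := hconn.2 T hT
  have hv' : v ∈ ((↑T : Set V)ᶜ) := by simpa using hST v hv
  have hu' : u ∈ ((↑T : Set V)ᶜ) := by simpa using huT
  obtain ⟨p⟩ := hc.preconnected ⟨v, hv'⟩ ⟨u, hu'⟩
  have : (⟨u, hu'⟩ : ((↑T : Set V)ᶜ : Set V)).1 ∈ S := by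
    refine walk_closed (H := G.induce ((↑T : Set V)ᶜ))
      (S := {x : ((↑T : Set V)ᶜ : Set V) | ↑x ∈ S}) ?_ p (by exact hv)
    rintro a ha b hadj
    have hab : G.Adj ↑a ↑b := by simpa using hadj
    rcases hcl _ ha _ hab with h | h
    · exact h
    · exact absurd (Finset.mem_coe.mpr h) b.2
  exact hu this

lemma exists_outside {V : Type*} [Fintype V] {s : Set V} (h : s.ncard < Fintype.card V) :
    ∃ u, u ∉ s := by
  by_contra hcon
  push_neg at hcon
  have : s = Set.univ := Set.eq_univ_of_forall hcon
  rw [this, Set.ncard_univ, Nat.card_eq_fintype_card] at h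
  omega

lemma ncard_le7 {V : Type*} (a b c d e f g : V) : ({a,b,c,d,e,f,g} : Set V).ncard ≤ 7 := by
  refine le_trans (Set.ncard_insert_le _ _) ?_
  have h2 : ({b,c,d,e,f,g} : Set V).ncard ≤ 6 := by
    refine le_trans (Set.ncard_insert_le _ _) ?_
    have h3 : ({c,d,e,f,g} : Set V).ncard ≤ 5 := by
      refine le_trans (Set.ncard_insert_le _ _) ?_
      have h4 : ({d,e,f,g} : Set V).ncard ≤ 4 := by
        refine le_trans (Set.ncard_insert_le _ _) ?_
        have h5 : ({e,f,g} : Set V).ncard ≤ 3 := by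
          refine le_trans (Set.ncard_insert_le _ _) ?_
          have h6 : ({f,g} : Set V).ncard ≤ 2 := by
            refine le_trans (Set.ncard_insert_le _ _) ?_
            simp
          omega
        omega
      omega
    omega
  omega

lemma ncard_le5 {V : Type*} (a b c d e : V) : ({a,b,c,d,e} : Set V).ncard ≤ 5 := by
  refine le_trans (Set.ncard_insert_le _ _) ?_
  have h3 : ({b,c,d,e} : Set V).ncard ≤ 4 := by
    refine le_trans (Set.ncard_insert_le _ _) ?_
    have h4 : ({c,d,e} : Set V).ncard ≤ 3 := by
      refine le_trans (Set.ncard_insert_le _ _) ?_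
      have h5 : ({d,e} : Set V).ncard ≤ 2 := by
        refine le_trans (Set.ncard_insert_le _ _) ?_
        simp
      omega
    omega
  omega

lemma ncard_le6 {V : Type*} (a b c d e f : V) : ({a,b,c,d,e,f} : Set V).ncard ≤ 6 := by
  refine le_trans (Set.ncard_insert_le _ _) ?_
  have := ncard_le5 b c d e f
  omega

lemma local_cycle {V : Type*} [Fintype V] (G : SimpleGraph V) {v : V}
    (hreg4 : (G.neighborSet v).ncard = 4)
    (h : ¬ (G.induce (G.neighborSet v)).IsAcyclic) :
    (∃ x y z : V, x ∈ G.neighborSet v ∧ y ∈ G.neighborSet v ∧ z ∈ G.neighborSet v ∧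
      x ≠ y ∧ x ≠ z ∧ y ≠ z ∧ G.Adj x y ∧ G.Adj x z ∧ G.Adj y z) ∨
    (∃ x y z w : V, x ∈ G.neighborSet v ∧ y ∈ G.neighborSet v ∧ z ∈ G.neighborSet v ∧
      w ∈ G.neighborSet v ∧ x ≠ y ∧ x ≠ z ∧ x ≠ w ∧ y ≠ z ∧ y ≠ w ∧ z ≠ w ∧
      G.Adj x y ∧ G.Adj y z ∧ G.Adj z w ∧ G.Adj w x) := by
  classical
  have hc : Fintype.card (G.neighborSet v) = 4 := by
    rw [← Set.toFinset_card, ← Set.ncard_eq_toFinset_card']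
    exact hreg4
  rcases small_cycle _ (le_of_eq hc) h with
    ⟨x, y, z, h1, h2, h3, e1, e2, e3⟩ | ⟨x, y, z, w, h1, h2, h3, h4, h5, h6, e1, e2, e3, e4⟩
  · left
    refine ⟨x, y, z, x.2, y.2, z.2, Subtype.coe_ne_coe.mpr h1, Subtype.coe_ne_coe.mpr h2,
      Subtype.coe_ne_coe.mpr h3, ?_, ?_, ?_⟩ <;> simpa using ‹_›
  · right
    refine ⟨x, y, z, w, x.2, y.2, z.2, w.2, Subtype.coe_ne_coe.mpr h1, Subtype.coe_ne_coe.mpr h2,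
      Subtype.coe_ne_coe.mpr h3, Subtype.coe_ne_coe.mpr h4, Subtype.coe_ne_coe.mpr h5,
      Subtype.coe_ne_coe.mpr h6, ?_, ?_, ?_, ?_⟩ <;> simpa using ‹_›

end Helpers

section Main

variable {V : Type*} [Fintype V] {G : SimpleGraph V}

lemma paw_contra (hreg : ∀ v : V, (G.neighborSet v).ncard = 4) (hloc : LocallyNonforesty G)
    {v a b c d : V} (hN : G.neighborSet v = {a, b, c, d})
    (nab : a ≠ b) (nac : a ≠ c) (nad : a ≠ d) (nbc : b ≠ c) (nbd : b ≠ d) (ncd : c ≠ d)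
    (hab : G.Adj a b) (hac : G.Adj a c) (hbc : G.Adj b c)
    (had : G.Adj a d) (hbd : ¬G.Adj b d) (hcd : ¬G.Adj c d) : False := by
  classical
  have hva : G.Adj v a := by
    have : a ∈ G.neighborSet v := by rw [hN]; simp
    exact this
  have hvb : G.Adj v b := by
    have : b ∈ G.neighborSet v := by rw [hN]; simp
    exact this
  have hvc : G.Adj v c := by
    have : c ∈ G.neighborSet v := by rw [hN]; simp
    exact this
  have hvd : G.Adj v d := by
    have : d ∈ G.neighborSet v := by rw [hN]; simp
    exact this
  have nva : v ≠ a := G.ne_of_adj hva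
  have nvb : v ≠ b := G.ne_of_adj hvb
  have nvc : v ≠ c := G.ne_of_adj hvc
  have nvd : v ≠ d := G.ne_of_adj hvd
  have hNa : G.neighborSet a = {v, b, c, d} :=
    set_eq_four (hreg a) (show v ∈ _ from hva.symm) (show b ∈ _ from hab)
      (show c ∈ _ from hac) (show d ∈ _ from had) nvb nvc nvd nbc nbd ncd
  obtain ⟨p, q, npq, npv, npa, nqv, nqa, hNd⟩ :=
    exists_pair (hreg d) (show v ∈ _ from hvd.symm) (show a ∈ _ from had.symm) nva
  have hdp : G.Adj d p := by
    have : p ∈ G.neighborSet d := by rw [hNd]; simp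
    exact this
  have hdq : G.Adj d q := by
    have : q ∈ G.neighborSet d := by rw [hNd]; simp
    exact this
  have npb : p ≠ b := fun e => hbd (e ▸ hdp).symm
  have npc : p ≠ c := fun e => hcd (e ▸ hdp).symm
  have nqb : q ≠ b := fun e => hbd (e ▸ hdq).symm
  have nqc : q ≠ c := fun e => hcd (e ▸ hdq).symm
  have npd : p ≠ d := fun e => G.loopless.irrefl d (e ▸ hdp)
  have nqd : q ≠ d := fun e => G.loopless.irrefl d (e ▸ hdq)
  have nvp : ¬G.Adj v p := by
    intro h
    have : p ∈ G.neighborSet v := h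
    rw [hN] at this
    simp only [Set.mem_insert_iff, Set.mem_singleton_iff] at this
    rcases this with rfl | rfl | rfl | rfl <;> simp_all
  have nvq : ¬G.Adj v q := by
    intro h
    have : q ∈ G.neighborSet v := h
    rw [hN] at this
    simp only [Set.mem_insert_iff, Set.mem_singleton_iff] at this
    rcases this with rfl | rfl | rfl | rfl <;> simp_all
  have nap : ¬G.Adj a p := by
    intro h
    have : p ∈ G.neighborSet a := h
    rw [hNa] at this
    simp only [Set.mem_insert_iff, Set.mem_singleton_iff] at this
    rcases this with rfl | rfl | rfl | rfl <;> simp_all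
  have naq : ¬G.Adj a q := by
    intro h
    have : q ∈ G.neighborSet a := h
    rw [hNa] at this
    simp only [Set.mem_insert_iff, Set.mem_singleton_iff] at this
    rcases this with rfl | rfl | rfl | rfl <;> simp_all
  have npv : ¬G.Adj p v := fun h => nvp h.symm
  have nqv : ¬G.Adj q v := fun h => nvq h.symm
  have npa : ¬G.Adj p a := fun h => nap h.symm
  have nqa : ¬G.Adj q a := fun h => naq h.symm
  rcases local_cycle G (hreg d) (hloc d) with
    ⟨x1, x2, x3, m1, m2, m3, d12, d13, d23, e12, e13, e23⟩ |
    ⟨x1, x2, x3, x4, m1, m2, m3, m4, d12, d13, d14, d23, d24, d34, e12, e23, e34, e41⟩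
  · rw [hNd] at m1 m2 m3
    simp only [Set.mem_insert_iff, Set.mem_singleton_iff] at m1 m2 m3
    clear hN hNa hNd hdp hdq hva hvb hvc hvd hab hac hbc had hbd hcd hreg hloc
    clear npq npb npc nqb nqc npd nqd nva nvb nvc nvd nab nac nad nbc nbd ncd
    rcases m1 with rfl | rfl | rfl | rfl <;> rcases m2 with rfl | rfl | rfl | rfl <;>
      rcases m3 with rfl | rfl | rfl | rfl <;> simp_all
  · rw [hNd] at m1 m2 m3 m4
    simp only [Set.mem_insert_iff, Set.mem_singleton_iff] at m1 m2 m3 m4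
    clear hN hNa hNd hdp hdq hva hvb hvc hvd hab hac hbc had hbd hcd hreg hloc
    clear npq npb npc nqb nqc npd nqd nva nvb nvc nvd nab nac nad nbc nbd ncd
    rcases m1 with rfl | rfl | rfl | rfl <;> rcases m2 with rfl | rfl | rfl | rfl <;>
      rcases m3 with rfl | rfl | rfl | rfl <;> rcases m4 with rfl | rfl | rfl | rfl <;> simp_all

lemma k4_contra (hconn : KConnected G 4) {n : ℕ} (hn : Fintype.card V = n) (h8 : 8 ≤ n)
    (hreg : ∀ v : V, (G.neighborSet v).ncard = 4)
    {v a b c d : V} (hN : G.neighborSet v = {a, b, c, d})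
    (nab : a ≠ b) (nac : a ≠ c) (nad : a ≠ d) (nbc : b ≠ c) (nbd : b ≠ d) (ncd : c ≠ d)
    (hab : G.Adj a b) (hac : G.Adj a c) (hbc : G.Adj b c)
    (had : G.Adj a d) (hbd : G.Adj b d) (hcd : G.Adj c d) : False := by
  classical
  have hva : G.Adj v a := by
    have : a ∈ G.neighborSet v := by rw [hN]; simp
    exact this
  have hvb : G.Adj v b := by
    have : b ∈ G.neighborSet v := by rw [hN]; simp
    exact this
  have hvc : G.Adj v c := by
    have : c ∈ G.neighborSet v := by rw [hN]; simp
    exact this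
  have hvd : G.Adj v d := by
    have : d ∈ G.neighborSet v := by rw [hN]; simp
    exact this
  have nva : v ≠ a := G.ne_of_adj hva
  have nvb : v ≠ b := G.ne_of_adj hvb
  have nvc : v ≠ c := G.ne_of_adj hvc
  have nvd : v ≠ d := G.ne_of_adj hvd
  have hNa : G.neighborSet a = {v, b, c, d} :=
    set_eq_four (hreg a) (show v ∈ _ from hva.symm) (show b ∈ _ from hab)
      (show c ∈ _ from hac) (show d ∈ _ from had) nvb nvc nvd nbc nbd ncd
  have hNb : G.neighborSet b = {v, a, c, d} :=
    set_eq_four (hreg b) (show v ∈ _ from hvb.symm) (show a ∈ _ from hab.symm)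
      (show c ∈ _ from hbc) (show d ∈ _ from hbd) nva nvc nvd nac nad ncd
  have hNc : G.neighborSet c = {v, a, b, d} :=
    set_eq_four (hreg c) (show v ∈ _ from hvc.symm) (show a ∈ _ from hac.symm)
      (show b ∈ _ from hbc.symm) (show d ∈ _ from hcd) nva nvb nvd nab nad nbd
  have hNd : G.neighborSet d = {v, a, b, c} :=
    set_eq_four (hreg d) (show v ∈ _ from hvd.symm) (show a ∈ _ from had.symm)
      (show b ∈ _ from hbd.symm) (show c ∈ _ from hcd.symm) nva nvb nvc nab nac nbc
  have hS : ({v, a, b, c, d} : Set V).ncard < Fintype.card V := by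
    have := ncard_le5 v a b c d
    omega
  obtain ⟨u, hu⟩ := exists_outside hS
  simp only [Set.mem_insert_iff, Set.mem_singleton_iff, not_or] at hu
  refine cut_contra hconn ∅ (by simp) ({v, a, b, c, d} : Set V) (by simp) ?_
    (show v ∈ ({v, a, b, c, d} : Set V) by simp)
    (by simp only [Set.mem_insert_iff, Set.mem_singleton_iff]; tauto) (by simp)
  intro s hs t hadj
  left
  simp only [Set.mem_insert_iff, Set.mem_singleton_iff] at hs ⊢
  rcases hs with rfl | rfl | rfl | rfl | rfl
  · have : t ∈ G.neighborSet s := hadj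
    rw [hN] at this
    simp only [Set.mem_insert_iff, Set.mem_singleton_iff] at this
    tauto
  · have : t ∈ G.neighborSet s := hadj
    rw [hNa] at this
    simp only [Set.mem_insert_iff, Set.mem_singleton_iff] at this
    tauto
  · have : t ∈ G.neighborSet s := hadj
    rw [hNb] at this
    simp only [Set.mem_insert_iff, Set.mem_singleton_iff] at this
    tauto
  · have : t ∈ G.neighborSet s := hadj
    rw [hNc] at this
    simp only [Set.mem_insert_iff, Set.mem_singleton_iff] at this
    tauto
  · have : t ∈ G.neighborSet s := hadj
    rw [hNd] at this
    simp only [Set.mem_insert_iff, Set.mem_singleton_iff] at this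
    tauto

set_option maxHeartbeats 1600000 in
lemma diamond_contra (hconn : KConnected G 4) {n : ℕ} (hn : Fintype.card V = n) (h8 : 8 ≤ n)
    (hreg : ∀ v : V, (G.neighborSet v).ncard = 4)
    {v a b c d : V} (hN : G.neighborSet v = {a, b, c, d})
    (nab : a ≠ b) (nac : a ≠ c) (nad : a ≠ d) (nbc : b ≠ c) (nbd : b ≠ d) (ncd : c ≠ d)
    (hab : G.Adj a b) (hac : G.Adj a c) (hbc : G.Adj b c)
    (had : G.Adj a d) (hbd : G.Adj b d) (hcd : ¬G.Adj c d) : False := by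
  classical
  have hva : G.Adj v a := by
    have : a ∈ G.neighborSet v := by rw [hN]; simp
    exact this
  have hvb : G.Adj v b := by
    have : b ∈ G.neighborSet v := by rw [hN]; simp
    exact this
  have hvc : G.Adj v c := by
    have : c ∈ G.neighborSet v := by rw [hN]; simp
    exact this
  have hvd : G.Adj v d := by
    have : d ∈ G.neighborSet v := by rw [hN]; simp
    exact this
  have nva : v ≠ a := G.ne_of_adj hva
  have nvb : v ≠ b := G.ne_of_adj hvb
  have nvc : v ≠ c := G.ne_of_adj hvc
  have nvd : v ≠ d := G.ne_of_adj hvd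
  have hNa : G.neighborSet a = {v, b, c, d} :=
    set_eq_four (hreg a) (show v ∈ _ from hva.symm) (show b ∈ _ from hab)
      (show c ∈ _ from hac) (show d ∈ _ from had) nvb nvc nvd nbc nbd ncd
  have hNb : G.neighborSet b = {v, a, c, d} :=
    set_eq_four (hreg b) (show v ∈ _ from hvb.symm) (show a ∈ _ from hab.symm)
      (show c ∈ _ from hbc) (show d ∈ _ from hbd) nva nvc nvd nac nad ncd
  obtain ⟨p, hpv, hpa, hpb, hNc⟩ :=
    exists_fourth_s3 (hreg c) (show v ∈ _ from hvc.symm) (show a ∈ _ from hac.symm)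
      (show b ∈ _ from hbc.symm) nva nvb nab
  obtain ⟨q, hqv, hqa, hqb, hNd⟩ :=
    exists_fourth_s3 (hreg d) (show v ∈ _ from hvd.symm) (show a ∈ _ from had.symm)
      (show b ∈ _ from hbd.symm) nva nvb nab
  have hcp : G.Adj c p := by
    have : p ∈ G.neighborSet c := by rw [hNc]; simp
    exact this
  have hdq : G.Adj d q := by
    have : q ∈ G.neighborSet d := by rw [hNd]; simp
    exact this
  have npc : p ≠ c := fun e => G.loopless.irrefl c (e ▸ hcp)
  have nqd : q ≠ d := fun e => G.loopless.irrefl d (e ▸ hdq)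
  have npd : p ≠ d := fun e => hcd (e ▸ hcp)
  have nqc : q ≠ c := fun e => hcd (e ▸ hdq).symm
  -- the cut
  have hS : ({v, a, b, c, d} ∪ (↑({p, q} : Finset V) : Set V)).ncard < Fintype.card V := by
    have h1 := ncard_le7 v a b c d p q
    have h2 : ({v, a, b, c, d} ∪ (↑({p, q} : Finset V) : Set V))
        = ({v, a, b, c, d, p, q} : Set V) := by
      simp only [Finset.coe_insert, Finset.coe_singleton]
      ext t
      simp only [Set.mem_union, Set.mem_insert_iff, Set.mem_singleton_iff]
      tauto
    rw [h2]
    omega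
  obtain ⟨u, hu⟩ := exists_outside hS
  simp only [Set.mem_union, Set.mem_insert_iff, Set.mem_singleton_iff, Finset.coe_insert,
    Finset.coe_singleton, not_or] at hu
  refine cut_contra (u := u) hconn ({p, q} : Finset V)
    (lt_of_le_of_lt (Finset.card_insert_le _ _) (by simp)) ({v, a, b, c, d} : Set V) ?_ ?_
    (show v ∈ ({v, a, b, c, d} : Set V) by simp) ?_ ?_
  · intro s hs
    simp only [Set.mem_insert_iff, Set.mem_singleton_iff] at hs
    simp only [Finset.mem_insert, Finset.mem_singleton]
    rcases hs with rfl | rfl | rfl | rfl | rfl <;>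
      exact fun h => by
        rcases h with rfl | rfl <;>
          first
          | exact hpv rfl | exact hqv rfl | exact hpa rfl | exact hqa rfl
          | exact hpb rfl | exact hqb rfl | exact npc rfl | exact nqc rfl
          | exact npd rfl | exact nqd rfl
          | exact hpv.symm rfl | exact hqv.symm rfl | exact hpa.symm rfl | exact hqa.symm rfl
          | exact hpb.symm rfl | exact hqb.symm rfl | exact npc.symm rfl | exact nqc.symm rfl
          | exact npd.symm rfl | exact nqd.symm rfl
  · intro s hs t hadj
    simp only [Set.mem_insert_iff, Set.mem_singleton_iff] at hs
    simp only [Set.mem_insert_iff, Set.mem_singleton_iff, Finset.mem_insert,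
      Finset.mem_singleton]
    rcases hs with rfl | rfl | rfl | rfl | rfl
    · have : t ∈ G.neighborSet s := hadj
      rw [hN] at this
      simp only [Set.mem_insert_iff, Set.mem_singleton_iff] at this
      tauto
    · have : t ∈ G.neighborSet s := hadj
      rw [hNa] at this
      simp only [Set.mem_insert_iff, Set.mem_singleton_iff] at this
      tauto
    · have : t ∈ G.neighborSet s := hadj
      rw [hNb] at this
      simp only [Set.mem_insert_iff, Set.mem_singleton_iff] at this
      tauto
    · have : t ∈ G.neighborSet s := hadj
      rw [hNc] at this
      simp only [Set.mem_insert_iff, Set.mem_singleton_iff] at this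
      tauto
    · have : t ∈ G.neighborSet s := hadj
      rw [hNd] at this
      simp only [Set.mem_insert_iff, Set.mem_singleton_iff] at this
      tauto
  · simp only [Set.mem_insert_iff, Set.mem_singleton_iff]
    tauto
  · simp only [Finset.mem_insert, Finset.mem_singleton]
    tauto

set_option maxHeartbeats 3200000 in
lemma c4_contra (hconn : KConnected G 4) {n : ℕ} (hn : Fintype.card V = n) (h8 : 8 ≤ n)
    (hreg : ∀ v : V, (G.neighborSet v).ncard = 4) (hloc : LocallyNonforesty G)
    {v x y z w : V} (hN : G.neighborSet v = {x, y, z, w})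
    (nxy : x ≠ y) (nxz : x ≠ z) (nxw : x ≠ w) (nyz : y ≠ z) (nyw : y ≠ w) (nzw : z ≠ w)
    (exy : G.Adj x y) (eyz : G.Adj y z) (ezw : G.Adj z w) (ewx : G.Adj w x)
    (cxz : ¬G.Adj x z) (cyw : ¬G.Adj y w) : False := by
  classical
  have hvx : G.Adj v x := by
    have : x ∈ G.neighborSet v := by rw [hN]; simp
    exact this
  have hvy : G.Adj v y := by
    have : y ∈ G.neighborSet v := by rw [hN]; simp
    exact this
  have hvz : G.Adj v z := by
    have : z ∈ G.neighborSet v := by rw [hN]; simp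
    exact this
  have hvw : G.Adj v w := by
    have : w ∈ G.neighborSet v := by rw [hN]; simp
    exact this
  have nvx : v ≠ x := G.ne_of_adj hvx
  have nvy : v ≠ y := G.ne_of_adj hvy
  have nvz : v ≠ z := G.ne_of_adj hvz
  have nvw : v ≠ w := G.ne_of_adj hvw
  obtain ⟨p, hpv, hpy, hpw, hNx⟩ :=
    exists_fourth_s3 (hreg x) (show v ∈ _ from hvx.symm) (show y ∈ _ from exy)
      (show w ∈ _ from ewx.symm) nvy nvw nyw
  have hxp : G.Adj x p := by
    have : p ∈ G.neighborSet x := by rw [hNx]; simp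
    exact this
  have npx : p ≠ x := fun e => G.loopless.irrefl x (e ▸ hxp)
  have npz : p ≠ z := fun e => cxz (e ▸ hxp)
  have nvp : ¬G.Adj v p := by
    intro h
    have : p ∈ G.neighborSet v := h
    rw [hN] at this
    simp only [Set.mem_insert_iff, Set.mem_singleton_iff] at this
    rcases this with rfl | rfl | rfl | rfl
    · exact npx rfl
    · exact hpy rfl
    · exact npz rfl
    · exact hpw rfl
  have npv : ¬G.Adj p v := fun h => nvp h.symm
  have cwy : ¬G.Adj w y := fun h => cyw h.symm
  have hyp2 : G.Adj y p ∧ G.Adj w p := by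
    rcases local_cycle G (hreg x) (hloc x) with
      ⟨x1, x2, x3, m1, m2, m3, d12, d13, d23, e12, e13, e23⟩ |
      ⟨x1, x2, x3, x4, m1, m2, m3, m4, d12, d13, d14, d23, d24, d34, e12, e23, e34, e41⟩
    · rw [hNx] at m1 m2 m3
      simp only [Set.mem_insert_iff, Set.mem_singleton_iff] at m1 m2 m3
      clear hN hNx hxp hvx hvz exy eyz ezw ewx cxz hreg hloc hconn
      clear npx npz nvx nvz nxy nxz nxw nyz nzw hpv hpy hpw hn h8
      rcases m1 with rfl | rfl | rfl | rfl <;> rcases m2 with rfl | rfl | rfl | rfl <;>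
        rcases m3 with rfl | rfl | rfl | rfl <;> simp_all [G.adj_comm]
    · rw [hNx] at m1 m2 m3 m4
      simp only [Set.mem_insert_iff, Set.mem_singleton_iff] at m1 m2 m3 m4
      clear hN hNx hxp hvx hvz exy eyz ezw ewx cxz hreg hloc hconn
      clear npx npz nvx nvz nxy nxz nxw nyz nzw hpv hpy hpw hn h8
      rcases m1 with rfl | rfl | rfl | rfl <;> rcases m2 with rfl | rfl | rfl | rfl <;>
        rcases m3 with rfl | rfl | rfl | rfl <;> rcases m4 with rfl | rfl | rfl | rfl <;>
          simp_all [G.adj_comm]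
  obtain ⟨hyp, hwp⟩ := hyp2
  have hNy : G.neighborSet y = {v, x, z, p} :=
    set_eq_four (hreg y) (show v ∈ _ from hvy.symm) (show x ∈ _ from exy.symm)
      (show z ∈ _ from eyz) (show p ∈ _ from hyp) nvx nvz (Ne.symm hpv) nxz
      (Ne.symm npx) (Ne.symm npz)
  have hzp : G.Adj z p := by
    rcases local_cycle G (hreg y) (hloc y) with
      ⟨x1, x2, x3, m1, m2, m3, d12, d13, d23, e12, e13, e23⟩ |
      ⟨x1, x2, x3, x4, m1, m2, m3, m4, d12, d13, d14, d23, d24, d34, e12, e23, e34, e41⟩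
    · rw [hNy] at m1 m2 m3
      simp only [Set.mem_insert_iff, Set.mem_singleton_iff] at m1 m2 m3
      clear hN hNx hNy hvy hvw exy eyz ezw ewx cyw cwy hyp hwp hreg hloc hconn
      clear nvy nvw nxy nxw nyz nyw nzw hpv hpy hpw hn h8
      rcases m1 with rfl | rfl | rfl | rfl <;> rcases m2 with rfl | rfl | rfl | rfl <;>
        rcases m3 with rfl | rfl | rfl | rfl <;> simp_all [G.adj_comm]
    · rw [hNy] at m1 m2 m3 m4
      simp only [Set.mem_insert_iff, Set.mem_singleton_iff] at m1 m2 m3 m4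
      clear hN hNx hNy hvy hvw exy eyz ezw ewx cyw cwy hyp hwp hreg hloc hconn
      clear nvy nvw nxy nxw nyz nyw nzw hpv hpy hpw hn h8
      rcases m1 with rfl | rfl | rfl | rfl <;> rcases m2 with rfl | rfl | rfl | rfl <;>
        rcases m3 with rfl | rfl | rfl | rfl <;> rcases m4 with rfl | rfl | rfl | rfl <;>
          simp_all [G.adj_comm]
  have hNz : G.neighborSet z = {v, y, w, p} :=
    set_eq_four (hreg z) (show v ∈ _ from hvz.symm) (show y ∈ _ from eyz.symm)
      (show w ∈ _ from ezw) (show p ∈ _ from hzp) nvy nvw (Ne.symm hpv) nyw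
      (Ne.symm hpy) (Ne.symm hpw)
  have hNw : G.neighborSet w = {v, x, z, p} :=
    set_eq_four (hreg w) (show v ∈ _ from hvw.symm) (show x ∈ _ from ewx)
      (show z ∈ _ from ezw.symm) (show p ∈ _ from hwp) nvx nvz (Ne.symm hpv) nxz
      (Ne.symm npx) (Ne.symm npz)
  have hNp : G.neighborSet p = {x, y, z, w} :=
    set_eq_four (hreg p) (show x ∈ _ from hxp.symm) (show y ∈ _ from hyp.symm)
      (show z ∈ _ from hzp.symm) (show w ∈ _ from hwp.symm) nxy nxz nxw nyz nyw nzw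
  have hS : ({v, x, y, z, w, p} : Set V).ncard < Fintype.card V := by
    have := ncard_le6 v x y z w p
    omega
  obtain ⟨u, hu⟩ := exists_outside hS
  simp only [Set.mem_insert_iff, Set.mem_singleton_iff, not_or] at hu
  refine cut_contra (u := u) hconn ∅ (by simp) ({v, x, y, z, w, p} : Set V) (by simp) ?_
    (show v ∈ ({v, x, y, z, w, p} : Set V) by simp)
    (by simp only [Set.mem_insert_iff, Set.mem_singleton_iff]; tauto) (by simp)
  intro s hs t hadj
  left
  simp only [Set.mem_insert_iff, Set.mem_singleton_iff] at hs ⊢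
  rcases hs with rfl | rfl | rfl | rfl | rfl | rfl
  · have : t ∈ G.neighborSet s := hadj
    rw [hN] at this
    simp only [Set.mem_insert_iff, Set.mem_singleton_iff] at this
    tauto
  · have : t ∈ G.neighborSet s := hadj
    rw [hNx] at this
    simp only [Set.mem_insert_iff, Set.mem_singleton_iff] at this
    tauto
  · have : t ∈ G.neighborSet s := hadj
    rw [hNy] at this
    simp only [Set.mem_insert_iff, Set.mem_singleton_iff] at this
    tauto
  · have : t ∈ G.neighborSet s := hadj
    rw [hNz] at this
    simp only [Set.mem_insert_iff, Set.mem_singleton_iff] at this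
    tauto
  · have : t ∈ G.neighborSet s := hadj
    rw [hNw] at this
    simp only [Set.mem_insert_iff, Set.mem_singleton_iff] at this
    tauto
  · have : t ∈ G.neighborSet s := hadj
    rw [hNp] at this
    simp only [Set.mem_insert_iff, Set.mem_singleton_iff] at this
    tauto

lemma struct (hconn : KConnected G 4) {n : ℕ} (hn : Fintype.card V = n) (h8 : 8 ≤ n)
    (hreg : ∀ v : V, (G.neighborSet v).ncard = 4) (hloc : LocallyNonforesty G) (v : V) :
    ∃ a b c d : V, a ≠ b ∧ a ≠ c ∧ a ≠ d ∧ b ≠ c ∧ b ≠ d ∧ c ≠ d ∧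
      G.neighborSet v = {a, b, c, d} ∧ G.Adj a b ∧ G.Adj a c ∧ G.Adj b c ∧
      ¬G.Adj a d ∧ ¬G.Adj b d ∧ ¬G.Adj c d := by
  by_cases htri : ∃ x y z : V, x ∈ G.neighborSet v ∧ y ∈ G.neighborSet v ∧
      z ∈ G.neighborSet v ∧ x ≠ y ∧ x ≠ z ∧ y ≠ z ∧ G.Adj x y ∧ G.Adj x z ∧ G.Adj y z
  · obtain ⟨x, y, z, hx, hy, hz, nxy, nxz, nyz, exy, exz, eyz⟩ := htri
    obtain ⟨d, ndx, ndy, ndz, hNv⟩ := exists_fourth_s3 (hreg v) hx hy hz nxy nxz nyz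
    by_cases h1 : G.Adj x d <;> by_cases h2 : G.Adj y d <;> by_cases h3 : G.Adj z d
    · exact absurd (k4_contra hconn hn h8 hreg hNv nxy nxz (Ne.symm ndx) nyz (Ne.symm ndy)
        (Ne.symm ndz) exy exz eyz h1 h2 h3) not_false
    · exact absurd (diamond_contra hconn hn h8 hreg hNv nxy nxz (Ne.symm ndx) nyz (Ne.symm ndy)
        (Ne.symm ndz) exy exz eyz h1 h2 h3) not_false
    · refine absurd (diamond_contra hconn hn h8 hreg (v := v) (a := z) (b := x) (c := y) (d := d)
        ?_ (Ne.symm nxz) (Ne.symm nyz) (Ne.symm ndz) nxy (Ne.symm ndx) (Ne.symm ndy)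
        exz.symm eyz.symm exy h3 h1 h2) not_false
      rw [hNv]; ext u; simp only [Set.mem_insert_iff, Set.mem_singleton_iff]; tauto
    · refine absurd (paw_contra hreg hloc (v := v) (a := x) (b := y) (c := z) (d := d)
        hNv nxy nxz (Ne.symm ndx) nyz (Ne.symm ndy) (Ne.symm ndz) exy exz eyz h1 h2 h3) not_false
    · refine absurd (diamond_contra hconn hn h8 hreg (v := v) (a := y) (b := z) (c := x) (d := d)
        ?_ nyz (Ne.symm nxy) (Ne.symm ndy) (Ne.symm nxz) (Ne.symm ndz) (Ne.symm ndx)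
        eyz exy.symm exz.symm h2 h3 h1) not_false
      rw [hNv]; ext u; simp only [Set.mem_insert_iff, Set.mem_singleton_iff]; tauto
    · refine absurd (paw_contra hreg hloc (v := v) (a := y) (b := x) (c := z) (d := d)
        ?_ (Ne.symm nxy) nyz (Ne.symm ndy) nxz (Ne.symm ndx) (Ne.symm ndz)
        exy.symm eyz exz h2 h1 h3) not_false
      rw [hNv]; ext u; simp only [Set.mem_insert_iff, Set.mem_singleton_iff]; tauto
    · refine absurd (paw_contra hreg hloc (v := v) (a := z) (b := x) (c := y) (d := d)
        ?_ (Ne.symm nxz) (Ne.symm nyz) (Ne.symm ndz) nxy (Ne.symm ndx) (Ne.symm ndy)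
        exz.symm eyz.symm exy h3 h1 h2) not_false
      rw [hNv]; ext u; simp only [Set.mem_insert_iff, Set.mem_singleton_iff]; tauto
    · exact ⟨x, y, z, d, nxy, nxz, Ne.symm ndx, nyz, Ne.symm ndy, Ne.symm ndz, hNv,
        exy, exz, eyz, h1, h2, h3⟩
  · rcases local_cycle G (hreg v) (hloc v) with h | ⟨x, y, z, w, hx, hy, hz, hw,
      nxy, nxz, nxw, nyz, nyw, nzw, exy, eyz, ezw, ewx⟩
    · exact absurd h htri
    · have cxz : ¬G.Adj x z := fun hc =>
        htri ⟨x, y, z, hx, hy, hz, nxy, nxz, nyz, exy, hc, eyz⟩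
      have cyw : ¬G.Adj y w := fun hc =>
        htri ⟨x, y, w, hx, hy, hw, nxy, nxw, nyw, exy, ewx.symm, hc⟩
      have hNv : G.neighborSet v = {x, y, z, w} :=
        set_eq_four (hreg v) hx hy hz hw nxy nxz nxw nyz nyw nzw
      exact absurd (c4_contra hconn hn h8 hreg hloc hNv nxy nxz nxw nyz nyw nzw
        exy eyz ezw ewx cxz cyw) not_false

end Main

section Final

variable {V : Type*} [Fintype V] {G : SimpleGraph V}

noncomputable def Kset (G : SimpleGraph V) (u : V) : Finset V :=
  @Finset.filter _ (fun t => t = u ∨ (G.Adj u t ∧ ∃ s, G.Adj u s ∧ G.Adj t s))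
    (Classical.decPred _) Finset.univ

lemma mem_Kset {G : SimpleGraph V} {u t : V} :
    t ∈ Kset G u ↔ (t = u ∨ (G.Adj u t ∧ ∃ s, G.Adj u s ∧ G.Adj t s)) := by
  classical
  simp [Kset]

lemma Kset_eq [DecidableEq V] {u a b c d : V}
    (nab : a ≠ b) (nac : a ≠ c) (nad : a ≠ d) (nbc : b ≠ c) (nbd : b ≠ d) (ncd : c ≠ d)
    (hN : G.neighborSet u = {a, b, c, d})
    (hab : G.Adj a b) (hac : G.Adj a c) (hbc : G.Adj b c)
    (had : ¬G.Adj a d) (hbd : ¬G.Adj b d) (hcd : ¬G.Adj c d) :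
    Kset G u = {u, a, b, c} := by
  have hua : G.Adj u a := by
    have : a ∈ G.neighborSet u := by rw [hN]; simp
    exact this
  have hub : G.Adj u b := by
    have : b ∈ G.neighborSet u := by rw [hN]; simp
    exact this
  have huc : G.Adj u c := by
    have : c ∈ G.neighborSet u := by rw [hN]; simp
    exact this
  ext t
  rw [mem_Kset]
  simp only [Finset.mem_insert, Finset.mem_singleton]
  constructor
  · rintro (rfl | ⟨hadj, s, hs1, hs2⟩)
    · exact Or.inl rfl
    · have ht : t ∈ G.neighborSet u := hadj
      have hsm : s ∈ G.neighborSet u := hs1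
      rw [hN] at ht hsm
      simp only [Set.mem_insert_iff, Set.mem_singleton_iff] at ht hsm
      rcases ht with rfl | rfl | rfl | rfl <;> rcases hsm with rfl | rfl | rfl | rfl <;>
        simp_all [G.adj_comm]
  · rintro (rfl | rfl | rfl | rfl)
    · exact Or.inl rfl
    · exact Or.inr ⟨hua, b, hub, hab⟩
    · exact Or.inr ⟨hub, a, hua, hab.symm⟩
    · exact Or.inr ⟨huc, a, hua, hac.symm⟩

set_option maxHeartbeats 1600000 in
lemma tri_step [DecidableEq V] (hconn : KConnected G 4) {n : ℕ} (hn : Fintype.card V = n) (h8 : 8 ≤ n)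
    (hreg : ∀ v : V, (G.neighborSet v).ncard = 4) (hloc : LocallyNonforesty G)
    {u a b c d : V}
    (nab : a ≠ b) (nac : a ≠ c) (nad : a ≠ d) (nbc : b ≠ c) (nbd : b ≠ d) (ncd : c ≠ d)
    (hN : G.neighborSet u = {a, b, c, d})
    (hab : G.Adj a b) (hac : G.Adj a c) (hbc : G.Adj b c)
    (had : ¬G.Adj a d) (hbd : ¬G.Adj b d) (hcd : ¬G.Adj c d) :
    Kset G a = Kset G u := by
  have hua : G.Adj u a := by
    have : a ∈ G.neighborSet u := by rw [hN]; simp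
    exact this
  have hub : G.Adj u b := by
    have : b ∈ G.neighborSet u := by rw [hN]; simp
    exact this
  have huc : G.Adj u c := by
    have : c ∈ G.neighborSet u := by rw [hN]; simp
    exact this
  have nub : u ≠ b := G.ne_of_adj hub
  have nuc : u ≠ c := G.ne_of_adj huc
  obtain ⟨a1, a2, a3, a4, m12, m13, m14, m23, m24, m34, hNa, t12, t13, t23, i1, i2, i3⟩ :=
    struct hconn hn h8 hreg hloc a
  have hmu : u = a1 ∨ u = a2 ∨ u = a3 ∨ u = a4 := by
    have : u ∈ G.neighborSet a := hua.symm
    rw [hNa] at this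
    simpa using this
  have hmb : b = a1 ∨ b = a2 ∨ b = a3 ∨ b = a4 := by
    have : b ∈ G.neighborSet a := hab
    rw [hNa] at this
    simpa using this
  have hmc : c = a1 ∨ c = a2 ∨ c = a3 ∨ c = a4 := by
    have : c ∈ G.neighborSet a := hac
    rw [hNa] at this
    simpa using this
  have na4u : a4 ≠ u := by
    rintro rfl
    rcases hmb with rfl | rfl | rfl | rfl
    · exact i1 hub.symm
    · exact i2 hub.symm
    · exact i3 hub.symm
    · exact nub rfl
  have na4b : a4 ≠ b := by
    rintro rfl
    rcases hmu with rfl | rfl | rfl | rfl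
    · exact i1 hub
    · exact i2 hub
    · exact i3 hub
    · exact nub rfl
  have na4c : a4 ≠ c := by
    rintro rfl
    rcases hmu with rfl | rfl | rfl | rfl
    · exact i1 huc
    · exact i2 huc
    · exact i3 huc
    · exact nuc rfl
  have mu : u = a1 ∨ u = a2 ∨ u = a3 := by
    rcases hmu with h | h | h | h
    · exact Or.inl h
    · exact Or.inr (Or.inl h)
    · exact Or.inr (Or.inr h)
    · exact absurd h.symm na4u
  have mb : b = a1 ∨ b = a2 ∨ b = a3 := by
    rcases hmb with h | h | h | h
    · exact Or.inl h
    · exact Or.inr (Or.inl h)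
    · exact Or.inr (Or.inr h)
    · exact absurd h.symm na4b
  have mc : c = a1 ∨ c = a2 ∨ c = a3 := by
    rcases hmc with h | h | h | h
    · exact Or.inl h
    · exact Or.inr (Or.inl h)
    · exact Or.inr (Or.inr h)
    · exact absurd h.symm na4c
  rw [Kset_eq m12 m13 m14 m23 m24 m34 hNa t12 t13 t23 i1 i2 i3,
    Kset_eq nab nac nad nbc nbd ncd hN hab hac hbc had hbd hcd]
  rcases mu with rfl | rfl | rfl <;> rcases mb with rfl | rfl | rfl <;>
    rcases mc with rfl | rfl | rfl <;>
    (ext t; simp only [Finset.mem_insert, Finset.mem_singleton]; tauto)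

end Final
section Final2

variable {V : Type*} [Fintype V] {G : SimpleGraph V}

lemma Kset_step [DecidableEq V] (hconn : KConnected G 4) {n : ℕ} (hn : Fintype.card V = n)
    (h8 : 8 ≤ n) (hreg : ∀ v : V, (G.neighborSet v).ncard = 4) (hloc : LocallyNonforesty G)
    (u t : V) (ht : t ∈ Kset G u) : Kset G t = Kset G u := by
  obtain ⟨a, b, c, d, nab, nac, nad, nbc, nbd, ncd, hN, hab, hac, hbc, had, hbd, hcd⟩ :=
    struct hconn hn h8 hreg hloc u
  rw [Kset_eq nab nac nad nbc nbd ncd hN hab hac hbc had hbd hcd] at ht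
  simp only [Finset.mem_insert, Finset.mem_singleton] at ht
  rcases ht with rfl | rfl | rfl | rfl
  · rfl
  · exact tri_step hconn hn h8 hreg hloc nab nac nad nbc nbd ncd hN hab hac hbc had hbd hcd
  · refine tri_step hconn hn h8 hreg hloc (Ne.symm nab) nbc nbd nac nad ncd ?_
      hab.symm hbc hac hbd had hcd
    rw [hN]; ext s; simp only [Set.mem_insert_iff, Set.mem_singleton_iff]; tauto
  · refine tri_step hconn hn h8 hreg hloc (Ne.symm nac) (Ne.symm nbc) ncd nab nad nbd ?_
      hac.symm hbc.symm hab hcd had hbd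
    rw [hN]; ext s; simp only [Set.mem_insert_iff, Set.mem_singleton_iff]; tauto

end Final2

set_option maxHeartbeats 3200000 in
theorem stmt_3 {V : Type*} [Fintype V] (G : SimpleGraph V) (n : ℕ)
    (hn : Fintype.card V = n) (h8 : 8 ≤ n)
    (hconn : KConnected G 4)
    (hreg : ∀ v : V, (G.neighborSet v).ncard = 4)
    (hloc : LocallyNonforesty G) :
    (∀ v : V, Nonempty ((G.induce (G.neighborSet v)) ≃g C3K1)) ∧ n % 4 = 0 := by
  classical
  constructor
  · intro v
    obtain ⟨a, b, c, d, nab, nac, nad, nbc, nbd, ncd, hN, hab, hac, hbc, had, hbd, hcd⟩ :=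
      struct hconn hn h8 hreg hloc v
    have ha : a ∈ G.neighborSet v := by rw [hN]; simp
    have hb : b ∈ G.neighborSet v := by rw [hN]; simp
    have hc : c ∈ G.neighborSet v := by rw [hN]; simp
    have hd : d ∈ G.neighborSet v := by rw [hN]; simp
    have nda : ¬G.Adj d a := fun h => had h.symm
    have ndb : ¬G.Adj d b := fun h => hbd h.symm
    have ndc : ¬G.Adj d c := fun h => hcd h.symm
    refine ⟨⟨⟨fun x => if (x : V) = a then 0 else if (x : V) = b then 1 else
        if (x : V) = c then 2 else 3,
      fun i => if i = 0 then ⟨a, ha⟩ else if i = 1 then ⟨b, hb⟩ else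
        if i = 2 then ⟨c, hc⟩ else ⟨d, hd⟩, ?_, ?_⟩, ?_⟩⟩
    · intro x
      have hx : (x : V) = a ∨ (x : V) = b ∨ (x : V) = c ∨ (x : V) = d := by
        have h3 := Set.ext_iff.mp hN (x : V)
        simpa using h3.mp x.2
      apply Subtype.ext
      rcases hx with h | h | h | h <;>
        simp [h, nab, nac, nad, nbc, nbd, ncd, Ne.symm nab, Ne.symm nac, Ne.symm nad,
          Ne.symm nbc, Ne.symm nbd, Ne.symm ncd]
    · intro i
      fin_cases i <;>
        simp [nab, nac, nad, nbc, nbd, ncd, Ne.symm nab, Ne.symm nac, Ne.symm nad,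
          Ne.symm nbc, Ne.symm nbd, Ne.symm ncd]
    · intro x y
      have hx : (x : V) = a ∨ (x : V) = b ∨ (x : V) = c ∨ (x : V) = d := by
        have h3 := Set.ext_iff.mp hN (x : V)
        simpa using h3.mp x.2
      have hy : (y : V) = a ∨ (y : V) = b ∨ (y : V) = c ∨ (y : V) = d := by
        have h3 := Set.ext_iff.mp hN (y : V)
        simpa using h3.mp y.2
      rcases hx with h1 | h1 | h1 | h1 <;> rcases hy with h2 | h2 | h2 | h2 <;>
        simp [C3K1, h1, h2, hab, hac, hbc, hab.symm, hac.symm, hbc.symm, had, hbd, hcd,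
          nda, ndb, ndc, nab, nac, nad, nbc, nbd, ncd, Ne.symm nab, Ne.symm nac, Ne.symm nad,
          Ne.symm nbc, Ne.symm nbd, Ne.symm ncd, SimpleGraph.irrefl]
  · set C : Finset (Finset V) := Finset.univ.image (Kset G) with hC
    have Kmem : ∀ u : V, u ∈ Kset G u := fun u => mem_Kset.mpr (Or.inl rfl)
    have hcard4 : ∀ u : V, (Kset G u).card = 4 := by
      intro u
      obtain ⟨a, b, c, d, nab, nac, nad, nbc, nbd, ncd, hN, hab, hac, hbc, had, hbd, hcd⟩ :=
        struct hconn hn h8 hreg hloc u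
      have hua : G.Adj u a := by
        have : a ∈ G.neighborSet u := by rw [hN]; simp
        exact this
      have hub : G.Adj u b := by
        have : b ∈ G.neighborSet u := by rw [hN]; simp
        exact this
      have huc : G.Adj u c := by
        have : c ∈ G.neighborSet u := by rw [hN]; simp
        exact this
      rw [Kset_eq nab nac nad nbc nbd ncd hN hab hac hbc had hbd hcd,
        Finset.card_insert_of_notMem
          (by simp [G.ne_of_adj hua, G.ne_of_adj hub, G.ne_of_adj huc]),
        Finset.card_insert_of_notMem (by simp [nab, nac]),
        Finset.card_insert_of_notMem (by simp [nbc]), Finset.card_singleton]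
    have hdisj : ∀ s ∈ C, ∀ t ∈ C, s ≠ t → Disjoint (id s) (id t) := by
      intro s hs t ht hne
      simp only [hC, Finset.mem_image, Finset.mem_univ, true_and] at hs ht
      obtain ⟨us, rfl⟩ := hs
      obtain ⟨ut, rfl⟩ := ht
      rw [Finset.disjoint_left]
      intro x hx1 hx2
      exact hne (by rw [← Kset_step hconn hn h8 hreg hloc _ _ hx1,
        Kset_step hconn hn h8 hreg hloc _ _ hx2])
    have hcover : Finset.univ = C.biUnion id := by
      ext t
      simp only [Finset.mem_univ, true_iff, Finset.mem_biUnion, id_eq]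
      exact ⟨Kset G t, Finset.mem_image_of_mem _ (Finset.mem_univ t), Kmem t⟩
    have hn2 : n = 4 * C.card := by
      have h1 : (Finset.univ : Finset V).card = (C.biUnion id).card := by rw [← hcover]
      rw [Finset.card_biUnion hdisj] at h1
      have h2 : (∑ s ∈ C, (id s).card) = ∑ s ∈ C, 4 := by
        refine Finset.sum_congr rfl ?_
        intro s hs
        simp only [hC, Finset.mem_image, Finset.mem_univ, true_and] at hs
        obtain ⟨us, rfl⟩ := hs
        exact hcard4 us
      rw [h2, Finset.sum_const, smul_eq_mul] at h1
      rw [Finset.card_univ, hn] at h1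
      omega
    omega
end

section
/- Let G be a 2-connected locally nonforesty graph that is not isomorphic to K_4, and let S be the set of vertices of G of degree exactly 3. Then the subgraph of G induced by S has maximum degree at most 1 (i.e., G[S] is a disjoint union of isolated vertices and a matching). -/
/-! The neighbourhood of a degree-3 vertex `v` has three vertices and contains a cycle, so it is
a triangle and `K = N[v]` is a 4-clique. If two neighbours `a`, `b` of `v` also have degree 3,
then the neighbourhoods of `v`, `a`, `b` all lie in `K`, so the fourth vertex `c` of `K` separates
`{v, a, b}` from the rest of the graph. By 2-connectivity there is no rest, and `G = K ≅ K₄`. -/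

open SimpleGraph

namespace SimpleGraph

variable {W : Type*} {H : SimpleGraph W}

lemma Walk.IsCycle.mem_support_of_natCard_eq_three [Finite W] (hW : Nat.card W = 3) {w : W}
    {c : H.Walk w w} (hc : c.IsCycle) (x : W) : x ∈ c.support := by
  classical
  have := Fintype.ofFinite W
  by_contra hx
  have hsub : c.support.tail.toFinset ⊆ Finset.univ.erase x := fun z hz =>
    Finset.mem_erase.2 ⟨fun hzx => hx (hzx ▸ List.mem_of_mem_tail (List.mem_toFinset.1 hz)),
      Finset.mem_univ z⟩
  have hcard := Finset.card_le_card hsub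
  rw [List.toFinset_card_of_nodup hc.support_nodup, Finset.card_erase_of_mem (Finset.mem_univ x),
    Finset.card_univ, Fintype.card_eq_nat_card, hW, List.length_tail, Walk.length_support] at hcard
  have := hc.three_le_length
  omega

lemma eq_top_of_natCard_eq_three_of_not_isAcyclic [Finite W] (hW : Nat.card W = 3)
    (h : ¬ H.IsAcyclic) : H = ⊤ := by
  obtain ⟨w, c, hc⟩ : ∃ w, ∃ c : H.Walk w w, c.IsCycle := by
    simpa [IsAcyclic] using h
  ext x y
  refine ⟨Adj.ne, fun hxy => ?_⟩
  have hsub : c.toSubgraph.neighborSet x ⊆ {x}ᶜ := fun z hz =>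
    (hz.adj_sub.ne.symm : z ≠ x)
  have hcompl : ({x}ᶜ : Set W).ncard = 2 := by
    rw [Set.ncard_compl, Set.ncard_singleton, hW]
  have hdeg := hc.ncard_neighborSet_toSubgraph_eq_two (hc.mem_support_of_natCard_eq_three hW x)
  have heq := Set.eq_of_subset_of_ncard_le hsub (by rw [hcompl, hdeg])
  have hy : y ∈ c.toSubgraph.neighborSet x := heq ▸ (Ne.symm hxy : y ≠ x)
  exact hy.adj_sub

variable {V : Type*} {G : SimpleGraph V}

lemma IsClique.neighborSet_eq_sdiff_singleton [Finite V] {K : Set V} (hK : G.IsClique K) {x : V}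
    (hx : x ∈ K) (hdeg : (G.neighborSet x).ncard + 1 ≤ K.ncard) :
    G.neighborSet x = K \ {x} := by
  have hsub : K \ {x} ⊆ G.neighborSet x := fun y ⟨hyK, hyx⟩ => hK hx hyK (Ne.symm hyx)
  refine (Set.eq_of_subset_of_ncard_le hsub ?_).symm
  rw [Set.ncard_sdiff_singleton_of_mem hx]
  omega

lemma eq_univ_of_preconnected_induce_compl {S K : Set V} (hS : (G.induce Sᶜ).Preconnected)
    (hSK : S ⊆ K) (hK : ∀ x ∈ K \ S, G.neighborSet x ⊆ K) {x : V} (hx : x ∈ K \ S) :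
    K = Set.univ := by
  refine Set.eq_univ_of_forall fun y => ?_
  by_cases hyS : y ∈ S
  · exact hSK hyS
  by_contra hyK
  obtain ⟨p⟩ := hS ⟨x, hx.2⟩ ⟨y, hyS⟩
  obtain ⟨d, -, hd₁, hd₂⟩ := p.exists_boundary_dart (Subtype.val ⁻¹' K) hx.1 hyK
  exact hd₂ (hK _ ⟨hd₁, d.fst.2⟩ d.adj)

lemma nonempty_iso_top_of_isClique_univ [Finite V] {n : ℕ} (hG : G.IsClique Set.univ)
    (hn : Nat.card V = n) : Nonempty (G ≃g (⊤ : SimpleGraph (Fin n))) := by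
  rw [isClique_univ.1 hG]
  exact ⟨Iso.completeGraph (Finite.equivFinOfCardEq hn)⟩

end SimpleGraph

lemma KConnected.preconnected_induce_compl_singleton {V : Type*} [Fintype V] {G : SimpleGraph V}
    (hG : KConnected G 2) (c : V) : (G.induce {c}ᶜ).Preconnected := by
  rw [← Finset.coe_singleton]
  exact (hG.2 {c} (by simp)).preconnected

lemma LocallyNonforesty.isClique_neighborSet {V : Type*} {G : SimpleGraph V}
    (hG : LocallyNonforesty G) {v : V} (hv : (G.neighborSet v).ncard = 3) :
    G.IsClique (G.neighborSet v) := by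
  have : Finite (G.neighborSet v) := (Set.finite_of_ncard_pos (by omega)).to_subtype
  exact induce_eq_top.1 <|
    eq_top_of_natCard_eq_three_of_not_isAcyclic (by rwa [Nat.card_coe_set_eq]) (hG v)

/-- Every vertex of degree 3 has at most one neighbor of degree 3; i.e., the subgraph
induced by the set `S` of degree-3 vertices has maximum degree at most 1. -/
theorem stmt_7 {V : Type*} [Fintype V] (G : SimpleGraph V)
    (hconn : KConnected G 2) (hloc : LocallyNonforesty G)
    (hK4 : ¬ Nonempty (G ≃g (⊤ : SimpleGraph (Fin 4)))) :
    ∀ v : V, (G.neighborSet v).ncard = 3 →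
      ({u : V | (G.neighborSet u).ncard = 3} ∩ G.neighborSet v).ncard ≤ 1 := by
  intro v hv
  by_contra! h
  obtain ⟨a, b, ⟨ha, hva⟩, ⟨hb, hvb⟩, hab⟩ :=
    (Set.one_lt_ncard_iff (Set.toFinite _)).1 h
  rw [Set.mem_ofPred_eq] at ha hb
  obtain ⟨c, hvc, hcab⟩ : ∃ c ∈ G.neighborSet v, c ∉ ({a, b} : Set V) :=
    Set.exists_mem_notMem_of_ncard_lt_ncard (by rw [Set.ncard_pair hab, hv]; omega)
  have hNv : G.neighborSet v = {a, b, c} := by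
    simp only [Set.mem_insert_iff, Set.mem_singleton_iff, not_or] at hcab
    refine (Set.eq_of_subset_of_ncard_le ?_ ?_).symm
    · simp [Set.insert_subset_iff, hva, hvb, hvc]
    · rw [hv, Set.ncard_eq_three.2 ⟨a, b, c, hab, Ne.symm hcab.1, Ne.symm hcab.2, rfl⟩]
  set K := insert v (G.neighborSet v)
  have hK : G.IsClique K := (hloc.isClique_neighborSet hv).insert fun _ hy _ => hy
  have hKcard : K.ncard = 4 := by
    rw [Set.ncard_insert_of_notMem G.notMem_neighborSet_self, hv]
  have hclosed : ∀ x ∈ K \ {c}, G.neighborSet x ⊆ K := by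
    rintro x ⟨hxK, hxc⟩
    obtain rfl | rfl | rfl : x = v ∨ x = a ∨ x = b := by
      simpa [K, hNv, hxc] using hxK
    · exact Set.subset_insert _ _
    all_goals
      exact (hK.neighborSet_eq_sdiff_singleton hxK (by omega)).trans_subset Set.sdiff_subset
  have hKuniv : K = Set.univ :=
    eq_univ_of_preconnected_induce_compl (hconn.preconnected_induce_compl_singleton c)
      (Set.singleton_subset_iff.2 (Set.mem_insert_of_mem v hvc)) hclosed
      ⟨Set.mem_insert v _, G.ne_of_adj hvc⟩
  exact hK4 (nonempty_iso_top_of_isClique_univ (hKuniv ▸ hK)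
    (by rw [← Set.ncard_univ, ← hKuniv, hKcard]))
end

section
/- Let G be a locally nonforesty graph, let S be the set of vertices of G of degree exactly 3, and suppose the subgraph of G induced by S has maximum degree at most 1. Then every vertex u ∉ S that has exactly i ≥ 1 neighbors in S satisfies deg(u) ≥ i + 1. -/
namespace SimpleGraph

open Finset

theorem eq_top_of_not_isAcyclic_of_card_le_three {X : Type*} [Finite X] {H : SimpleGraph X}
    (hcard : Nat.card X ≤ 3) (h : ¬ H.IsAcyclic) : H = ⊤ := by
  classical
  cases nonempty_fintype X
  obtain ⟨v, c, hc⟩ : ∃ v, ∃ c : H.Walk v v, c.IsCycle := by simpa [IsAcyclic] using h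
  rw [Nat.card_eq_fintype_card] at hcard
  have hedges : #(⊤ : SimpleGraph X).edgeFinset ≤ #H.edgeFinset := calc
    #(⊤ : SimpleGraph X).edgeFinset = (Fintype.card X).choose 2 :=
      card_edgeFinset_top_eq_card_choose_two
    _ ≤ 3 := by interval_cases Fintype.card X <;> decide
    _ ≤ c.length := hc.three_le_length
    _ ≤ #H.edgeFinset := hc.isTrail.length_le_card_edgeFinset
  exact edgeFinset_inj.mp
    (Finset.eq_of_subset_of_card_le (edgeFinset_subset_edgeFinset.mpr le_top) hedges)

end SimpleGraph

open SimpleGraph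

namespace LocallyNonforesty

variable {V : Type*} {G : SimpleGraph V}

theorem isClique_neighborSet_s8 (hG : LocallyNonforesty G) {v : V}
    (hv : (G.neighborSet v).ncard = 3) : G.IsClique (G.neighborSet v) := by
  have : Finite (G.neighborSet v) := Set.finite_of_ncard_ne_zero (by omega)
  exact induce_eq_top.mp (eq_top_of_not_isAcyclic_of_card_le_three
    (Nat.card_coe_set_eq _ ▸ hv.le) (hG v))

theorem neighborSet_diff_singleton_subset (hG : LocallyNonforesty G) {v u : V}
    (hv : (G.neighborSet v).ncard = 3) (hvu : G.Adj v u) :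
    G.neighborSet v \ {u} ⊆ G.neighborSet u := fun _ ⟨hx, hxu⟩ ↦
  hG.isClique_neighborSet_s8 hv hvu hx (Ne.symm hxu)

end LocallyNonforesty

theorem stmt_8_general {V : Type*} [Fintype V] (G : SimpleGraph V)
    (hloc : LocallyNonforesty G)
    -- the subgraph induced by the set `S` of degree-3 vertices has maximum degree ≤ 1
    (hS : ∀ v : V, (G.neighborSet v).ncard = 3 →
      ({u : V | (G.neighborSet u).ncard = 3} ∩ G.neighborSet v).ncard ≤ 1)
    (u : V) (i : ℕ) (hi : 1 ≤ i)
    (hni : ({w : V | (G.neighborSet w).ncard = 3} ∩ G.neighborSet u).ncard = i) :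
    i + 1 ≤ (G.neighborSet u).ncard := by
  set S := {w : V | (G.neighborSet w).ncard = 3}
  by_contra! hdeg
  have hNS : G.neighborSet u ⊆ S := Set.inter_eq_right.mp
    (Set.eq_of_subset_of_ncard_le Set.inter_subset_right (by omega) (Set.toFinite _))
  obtain ⟨w, hw3, huw⟩ : (S ∩ G.neighborSet u).Nonempty :=
    Set.nonempty_of_ncard_ne_zero (by omega)
  have hwu : u ∈ G.neighborSet w := huw.symm
  have hsub : G.neighborSet w \ {u} ⊆ S ∩ G.neighborSet w := fun x hx ↦
    ⟨hNS (hloc.neighborSet_diff_singleton_subset hw3 hwu hx), hx.1⟩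
  have hSw : 2 ≤ (S ∩ G.neighborSet w).ncard := by
    have := Set.ncard_le_ncard hsub (Set.toFinite _)
    rwa [Set.ncard_sdiff_singleton_of_mem hwu, hw3] at this
  exact absurd (hS w hw3) (by omega)

theorem stmt_8 {V : Type*} [Fintype V] (G : SimpleGraph V)
    (hloc : LocallyNonforesty G)
    -- the subgraph induced by the set `S` of degree-3 vertices has maximum degree ≤ 1
    (hS : ∀ v : V, (G.neighborSet v).ncard = 3 →
      ({u : V | (G.neighborSet u).ncard = 3} ∩ G.neighborSet v).ncard ≤ 1)
    (u : V) (hu : (G.neighborSet u).ncard ≠ 3) (i : ℕ) (hi : 1 ≤ i)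
    (hni : ({w : V | (G.neighborSet w).ncard = 3} ∩ G.neighborSet u).ncard = i) :
    i + 1 ≤ (G.neighborSet u).ncard :=
  stmt_8_general G hloc hS u i hi hni
end

section
/- Let G be a 2-connected locally nonforesty graph of order n ≥ 8 with minimum degree 3, and let S be the set of vertices of G of degree exactly 3. Suppose there exists a vertex u ∉ S having exactly i ≥ 1 neighbors in S and deg(u) = i + 1 (i.e., exactly one neighbor of u lies outside S). Then G is isomorphic to K_2 ∨ ((n−2)/2)K_2, the join of K_2 with (n−2)/2 disjoint edges; in particular n is even and the size of G equals 5n/2 − 4. -/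
open SimpleGraph

/-- The join `K₂ ∨ m·K₂` of an edge with `m` disjoint edges: the two vertices of the
left `K₂` are adjacent to everything, and the right part consists of `m` disjoint edges. -/
def K2JoinMK2 (m : ℕ) : SimpleGraph (Fin 2 ⊕ Fin m × Fin 2) where
  Adj a b := a ≠ b ∧ ∀ i x j y, a = Sum.inr (i, x) → b = Sum.inr (j, y) → i = j
  symm := by
    constructor
    rintro a b ⟨h1, h2⟩
    exact ⟨h1.symm, fun i x j y hb ha => (h2 j y i x ha hb).symm⟩
  loopless := by
    constructor
    rintro a ⟨h1, _⟩
    exact h1 rfl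

private lemma walk_closed' {V : Type*} {G : SimpleGraph V} {C : Set V}
    (hC : ∀ x ∈ C, ∀ y, G.Adj x y → y ∈ C) {a b : V} (p : G.Walk a b) :
    a ∈ C → b ∈ C := by
  induction p with
  | nil => exact id
  | cons h p ih => exact fun ha => ih (hC _ ha _ h)

private lemma clique3' {W : Type*} [Fintype W] (hW : Fintype.card W = 3)
    {H : SimpleGraph W} (h : ¬ H.IsAcyclic) :
    ∀ x y : W, x ≠ y → H.Adj x y := by
  classical
  simp only [SimpleGraph.IsAcyclic, not_forall, not_not] at h
  obtain ⟨v, c, hc⟩ := h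
  have h3 : 3 ≤ c.length := hc.three_le_length
  have hlen : c.length ≤ 3 := by
    have hnd := hc.support_nodup
    have := hnd.length_le_card
    have hl : c.support.tail.length = c.length := by
      have := c.length_support
      simp [List.length_tail, this]
    omega
  have hl3 : c.length = 3 := le_antisymm hlen h3
  cases c with
  | nil => simp at hl3
  | cons h1 p =>
    cases p with
    | nil => simp at hl3
    | cons h2 q =>
      cases q with
      | nil => simp at hl3
      | cons h3' r =>
        cases r with
        | nil =>
          rename_i a b
          have hnd := hc.support_nodup
          simp [SimpleGraph.Walk.support_cons] at hnd
          obtain ⟨⟨hab, hav⟩, hbv⟩ := hnd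
          have huniv : ∀ z : W, z = v ∨ z = a ∨ z = b := by
            intro z
            by_contra hz
            push_neg at hz
            obtain ⟨hz1, hz2, hz3⟩ := hz
            have : 4 ≤ Fintype.card W := by
              have h4 : ({z, v, a, b} : Finset W).card = 4 := by
                rw [Finset.card_insert_of_notMem (by simp [hz1, hz2, hz3]),
                  Finset.card_insert_of_notMem (by simp [Ne.symm hav, Ne.symm hbv]),
                  Finset.card_insert_of_notMem (by simp [hab]), Finset.card_singleton]
              calc 4 = ({z, v, a, b} : Finset W).card := h4.symm
                _ ≤ Fintype.card W := by
                    simpa using Finset.card_le_univ ({z, v, a, b} : Finset W)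
            omega
          intro x y hxy
          rcases huniv x with hx | hx | hx <;> rcases huniv y with hy | hy | hy <;>
            subst hx <;> subst hy <;>
            first
              | exact absurd rfl hxy
              | exact h1 | exact h1.symm | exact h2 | exact h2.symm
              | exact h3' | exact h3'.symm
        | cons h4 s =>
          simp at hl3

private lemma neighbor_clique' {V : Type*} [Fintype V] (G : SimpleGraph V)
    (hloc : LocallyNonforesty G) (v : V) (h3 : (G.neighborSet v).ncard = 3) :
    ∀ x y, x ∈ G.neighborSet v → y ∈ G.neighborSet v → x ≠ y → G.Adj x y := by
  classical
  haveI : Fintype ↥(G.neighborSet v) := Fintype.ofFinite _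
  have hcard : Fintype.card ↥(G.neighborSet v) = 3 := by
    rw [← Nat.card_coe_set_eq] at h3
    rwa [← Nat.card_eq_fintype_card]
  intro x y hx hy hxy
  exact clique3' hcard (hloc v) ⟨x, hx⟩ ⟨y, hy⟩ (by simpa using hxy)

theorem stmt_9 {V : Type*} [Fintype V] (G : SimpleGraph V) (n : ℕ)
    (hn : Fintype.card V = n) (h8 : 8 ≤ n)
    (hconn : KConnected G 2) (hloc : LocallyNonforesty G)
    -- minimum degree of `G` is 3
    (hmindeg : ∀ v : V, 3 ≤ (G.neighborSet v).ncard)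
    (hdelta : ∃ v : V, (G.neighborSet v).ncard = 3)
    -- `u ∉ S` has exactly `i ≥ 1` neighbors in `S` and degree `i + 1`
    (u : V) (hu : (G.neighborSet u).ncard ≠ 3) (i : ℕ) (hi : 1 ≤ i)
    (hni : ({w : V | (G.neighborSet w).ncard = 3} ∩ G.neighborSet u).ncard = i)
    (hdeg : (G.neighborSet u).ncard = i + 1) :
    n % 2 = 0 ∧ Nonempty (G ≃g K2JoinMK2 ((n - 2) / 2)) ∧
      G.edgeSet.ncard = 5 * n / 2 - 4 := by
  classical
  set S : Set V := {w : V | (G.neighborSet w).ncard = 3} with hSdef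
  set T : Set V := S ∩ G.neighborSet u with hTdef
  have hTcard : T.ncard = i := hni
  have hTsub : T ⊆ G.neighborSet u := Set.inter_subset_right
  -- i ≥ 3
  have hi3 : 3 ≤ i := by
    have h1 := hmindeg u
    rw [hdeg] at h1
    rcases Nat.lt_or_ge i 3 with h | h
    · interval_cases i <;> simp_all
    · exact h
  -- the unique neighbor of u outside S
  have hwex : (G.neighborSet u \ T).ncard = 1 := by
    rw [Set.ncard_diff hTsub, hTcard, hdeg]
    omega
  obtain ⟨w, hw⟩ := Set.ncard_eq_one.mp hwex
  have hw_mem : w ∈ G.neighborSet u := by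
    have : w ∈ G.neighborSet u \ T := hw ▸ rfl
    exact this.1
  have hw_nT : w ∉ T := by
    have : w ∈ G.neighborSet u \ T := hw ▸ rfl
    exact this.2
  have hw_nS : w ∉ S := fun hws => hw_nT ⟨hws, hw_mem⟩
  have hNu_split : ∀ x ∈ G.neighborSet u, x = w ∨ x ∈ T := by
    intro x hx
    by_cases hxT : x ∈ T
    · exact Or.inr hxT
    · left
      have : x ∈ G.neighborSet u \ T := ⟨hx, hxT⟩
      rw [hw] at this
      exact this
  have hadj_uw : G.Adj u w := hw_mem
  have huw : u ≠ w := fun h => G.irrefl (h ▸ hadj_uw)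
  have hu_nT : u ∉ T := fun h => G.irrefl (hTsub h)
  -- degree-3 neighborhoods are cliques
  have cls : ∀ s ∈ S, ∀ x y, x ∈ G.neighborSet s → y ∈ G.neighborSet s →
      x ≠ y → G.Adj x y := fun s hs => neighbor_clique' G hloc s hs
  -- every s in T is adjacent to w
  have hs_ne_u : ∀ s ∈ T, s ≠ u := fun s hs h => G.irrefl (h ▸ (hTsub hs))
  have hs_ne_w : ∀ s ∈ T, s ≠ w := fun s hs h => hw_nS (h ▸ hs.1)
  have key : ∀ s ∈ T, G.Adj s w := by
    intro s hsT
    by_contra hsw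
    have hs3 : (G.neighborSet s).ncard = 3 := hsT.1
    have hu_mem : u ∈ G.neighborSet s := (hTsub hsT).symm
    have h2' : ((G.neighborSet s) \ {u}).ncard = 2 := by
      rw [Set.ncard_diff (by simpa using hu_mem), hs3]
      simp
    obtain ⟨a, b, hab, hset⟩ := Set.ncard_eq_two.mp h2'
    have ha_mem : a ∈ G.neighborSet s := by
      have : a ∈ G.neighborSet s \ {u} := by rw [hset]; simp
      exact this.1
    have hb_mem : b ∈ G.neighborSet s := by
      have : b ∈ G.neighborSet s \ {u} := by rw [hset]; simp
      exact this.1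
    have hau : a ≠ u := by
      have : a ∈ G.neighborSet s \ {u} := by rw [hset]; simp
      simpa using this.2
    have hbu : b ≠ u := by
      have : b ∈ G.neighborSet s \ {u} := by rw [hset]; simp
      simpa using this.2
    have hadj_au : G.Adj a u := cls s hsT.1 a u ha_mem hu_mem hau
    have hadj_bu : G.Adj b u := cls s hsT.1 b u hb_mem hu_mem hbu
    have hadj_ab : G.Adj a b := cls s hsT.1 a b ha_mem hb_mem hab
    have haw : a ≠ w := fun h => hsw (h ▸ (ha_mem : G.Adj s a))
    have hbw : b ≠ w := fun h => hsw (h ▸ (hb_mem : G.Adj s b))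
    have haT : a ∈ T := by
      rcases hNu_split a hadj_au.symm with h | h
      · exact absurd h haw
      · exact h
    have hbT : b ∈ T := by
      rcases hNu_split b hadj_bu.symm with h | h
      · exact absurd h hbw
      · exact h
    have hNs : G.neighborSet s = insert u ({a, b} : Set V) := by
      rw [← hset, Set.insert_diff_singleton, Set.insert_eq_of_mem hu_mem]
    have hsu : s ≠ u := hs_ne_u s hsT
    have hsb : s ≠ b := fun h => G.irrefl (h ▸ (hb_mem : G.Adj s b))
    have hsa : s ≠ a := fun h => G.irrefl (h ▸ (ha_mem : G.Adj s a))
    have hNa : G.neighborSet a = {s, u, b} := by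
      refine (Set.eq_of_subset_of_ncard_le ?_ ?_ (Set.toFinite _)).symm
      · intro x hx
        rcases hx with h | h | h
        · exact h ▸ ((ha_mem : G.Adj s a).symm : G.Adj a s)
        · exact h ▸ hadj_au
        · exact h ▸ hadj_ab
      · rw [haT.1]
        rw [Set.ncard_insert_of_notMem (by simp [hsu, hsb]),
          Set.ncard_insert_of_notMem (by simp [Ne.symm hbu]), Set.ncard_singleton]
    have hNb : G.neighborSet b = {s, u, a} := by
      refine (Set.eq_of_subset_of_ncard_le ?_ ?_ (Set.toFinite _)).symm
      · intro x hx
        rcases hx with h | h | h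
        · exact h ▸ ((hb_mem : G.Adj s b).symm : G.Adj b s)
        · exact h ▸ hadj_bu
        · exact h ▸ hadj_ab.symm
      · rw [hbT.1]
        rw [Set.ncard_insert_of_notMem (by simp [hsu, hsa]),
          Set.ncard_insert_of_notMem (by simp [Ne.symm hau]), Set.ncard_singleton]
    -- connectivity contradiction: removing u separates {s,a,b} from w
    have hcon := (hconn.2 {u} (by simp)).preconnected
    have hsmem : s ∈ ((↑({u} : Finset V) : Set V))ᶜ := by simp [hsu]
    have hwmem : w ∈ ((↑({u} : Finset V) : Set V))ᶜ := by simp [Ne.symm huw]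
    obtain ⟨pw⟩ := hcon ⟨s, hsmem⟩ ⟨w, hwmem⟩
    set C : Set ↥(((↑({u} : Finset V) : Set V))ᶜ) :=
      {z | z.val = s ∨ z.val = a ∨ z.val = b} with hCdef
    have hclosed : ∀ x ∈ C, ∀ y, (G.induce ((↑({u} : Finset V) : Set V))ᶜ).Adj x y → y ∈ C := by
      intro x hx y hxy
      have hyne : y.val ≠ u := by
        have := y.prop
        simpa using this
      have hGxy : G.Adj x.val y.val := hxy
      rcases hx with h | h | h
      · have hy : y.val ∈ G.neighborSet s := h ▸ hGxy
        rw [hNs] at hy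
        rcases hy with h' | h' | h'
        · exact absurd h' hyne
        · exact Or.inr (Or.inl h')
        · exact Or.inr (Or.inr h')
      · have hy : y.val ∈ G.neighborSet a := h ▸ hGxy
        rw [hNa] at hy
        rcases hy with h' | h' | h'
        · exact Or.inl h'
        · exact absurd h' hyne
        · exact Or.inr (Or.inr h')
      · have hy : y.val ∈ G.neighborSet b := h ▸ hGxy
        rw [hNb] at hy
        rcases hy with h' | h' | h'
        · exact Or.inl h'
        · exact absurd h' hyne
        · exact Or.inr (Or.inl h')
    have hfinal : (⟨w, hwmem⟩ : ↥(((↑({u} : Finset V) : Set V))ᶜ)) ∈ C :=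
      walk_closed' hclosed pw (Or.inl rfl)
    rcases hfinal with h | h | h
    · exact hw_nS ((show w = s from h) ▸ hsT.1)
    · exact hw_nS ((show w = a from h) ▸ haT.1)
    · exact hw_nS ((show w = b from h) ▸ hbT.1)
  -- the pairing
  have hpair : ∀ s : V, ∃ t : V, s ∈ T →
      (G.neighborSet s = {u, w, t} ∧ t ≠ u ∧ t ≠ w ∧ t ∈ T) := by
    intro s
    by_cases hsT : s ∈ T
    · have hs3 : (G.neighborSet s).ncard = 3 := hsT.1
      have hu_mem : u ∈ G.neighborSet s := (hTsub hsT).symm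
      have hw_mem' : w ∈ G.neighborSet s := key s hsT
      have hsub2 : ({u, w} : Set V) ⊆ G.neighborSet s := by
        intro x hx
        rcases hx with h | h
        · exact h ▸ hu_mem
        · exact h ▸ hw_mem'
      have hset2 : ({u, w} : Set V).ncard = 2 := by
        rw [Set.ncard_insert_of_notMem (by simp [huw]), Set.ncard_singleton]
      have h1' : ((G.neighborSet s) \ {u, w}).ncard = 1 := by
        rw [Set.ncard_diff hsub2, hs3, hset2]
      obtain ⟨t, ht⟩ := Set.ncard_eq_one.mp h1'
      have htmem : t ∈ G.neighborSet s \ {u, w} := ht ▸ rfl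
      have htu : t ≠ u := fun h => htmem.2 (by simp [h])
      have htw : t ≠ w := fun h => htmem.2 (by simp [h])
      refine ⟨t, fun _ => ⟨?_, htu, htw, ?_⟩⟩
      · rw [← Set.union_diff_cancel hsub2, ht]
        ext x
        simp only [Set.mem_union, Set.mem_insert_iff, Set.mem_singleton_iff]
        tauto
      · have hadj_tu : G.Adj t u := cls s hsT.1 t u htmem.1 hu_mem htu
        rcases hNu_split t hadj_tu.symm with h | h
        · exact absurd h htw
        · exact h
    · exact ⟨u, fun h => absurd h hsT⟩
  choose p hp using hpair
  have hNp : ∀ s ∈ T, G.neighborSet s = {u, w, p s} := fun s hs => ((hp s) hs).1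
  have hpu : ∀ s ∈ T, p s ≠ u := fun s hs => ((hp s) hs).2.1
  have hpw : ∀ s ∈ T, p s ≠ w := fun s hs => ((hp s) hs).2.2.1
  have hpT : ∀ s ∈ T, p s ∈ T := fun s hs => ((hp s) hs).2.2.2
  have hAdj_sp : ∀ s ∈ T, G.Adj s (p s) := by
    intro s hs
    have : p s ∈ G.neighborSet s := by rw [hNp s hs]; simp
    exact this
  have hps_ne : ∀ s ∈ T, p s ≠ s := by
    intro s hs h
    exact G.irrefl (h ▸ hAdj_sp s hs)
  have hinv : ∀ s ∈ T, p (p s) = s := by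
    intro s hs
    have h1 : s ∈ G.neighborSet (p s) := (hAdj_sp s hs).symm
    rw [hNp (p s) (hpT s hs)] at h1
    rcases h1 with h | h | h
    · exact absurd h (hs_ne_u s hs)
    · exact absurd h (hs_ne_w s hs)
    · exact h.symm
  have hadj_iff : ∀ s ∈ T, ∀ t ∈ T, (G.Adj s t ↔ t = p s) := by
    intro s hs t ht
    constructor
    · intro h
      have : t ∈ G.neighborSet s := h
      rw [hNp s hs] at this
      rcases this with h' | h' | h'
      · exact absurd h' (hs_ne_u t ht)
      · exact absurd h' (hs_ne_w t ht)
      · exact h'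
    · intro h; exact h ▸ hAdj_sp s hs
  -- V = {u, w} ∪ T
  have Vset : ∀ z : V, z = u ∨ z = w ∨ z ∈ T := by
    intro z
    by_cases hzw : z = w
    · exact Or.inr (Or.inl hzw)
    have hcon := (hconn.2 {w} (by simp)).preconnected
    have humem : u ∈ ((↑({w} : Finset V) : Set V))ᶜ := by simp [huw]
    have hzmem : z ∈ ((↑({w} : Finset V) : Set V))ᶜ := by simp [hzw]
    obtain ⟨pw⟩ := hcon ⟨u, humem⟩ ⟨z, hzmem⟩
    set C : Set ↥(((↑({w} : Finset V) : Set V))ᶜ) :=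
      {z' | z'.val = u ∨ z'.val ∈ T} with hCdef
    have hclosed : ∀ x ∈ C, ∀ y,
        (G.induce ((↑({w} : Finset V) : Set V))ᶜ).Adj x y → y ∈ C := by
      intro x hx y hxy
      have hyne : y.val ≠ w := by simpa using y.prop
      have hGxy : G.Adj x.val y.val := hxy
      rcases hx with h | h
      · have hy : y.val ∈ G.neighborSet u := h ▸ hGxy
        rcases hNu_split _ hy with h' | h'
        · exact absurd h' hyne
        · exact Or.inr h'
      · have hy : y.val ∈ G.neighborSet x.val := hGxy
        rw [hNp x.val h] at hy
        rcases hy with h' | h' | h'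
        · exact Or.inl h'
        · exact absurd h' hyne
        · exact Or.inr (h' ▸ hpT x.val h)
    have hfinal : (⟨z, hzmem⟩ : ↥(((↑({w} : Finset V) : Set V))ᶜ)) ∈ C :=
      walk_closed' hclosed pw (Or.inl rfl)
    rcases hfinal with h | h
    · exact Or.inl h
    · exact Or.inr (Or.inr h)
  have hUniv : (Set.univ : Set V) = insert u (insert w T) := by
    ext z
    simp only [Set.mem_univ, true_iff, Set.mem_insert_iff]
    exact Vset z
  have hncount : n = i + 2 := by
    have h1 : (Set.univ : Set V).ncard = n := by
      rw [Set.ncard_univ, Nat.card_eq_fintype_card, hn]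
    rw [hUniv, Set.ncard_insert_of_notMem (by simp [huw, hu_nT]),
      Set.ncard_insert_of_notMem hw_nT, hTcard] at h1
    omega
  -- the fixed-point-free involution on the subtype of T
  haveI : Fintype ↥T := Fintype.ofFinite _
  let P : ↥T → ↥T := fun s => ⟨p s.val, hpT s.val s.prop⟩
  have hPinv : ∀ s : ↥T, P (P s) = s := fun s => Subtype.ext (hinv s.val s.prop)
  have hPne : ∀ s : ↥T, P s ≠ s := fun s h => hps_ne s.val s.prop (congrArg Subtype.val h)
  have hPval : ∀ s : ↥T, (P s).val = p s.val := fun s => rfl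
  let r : ↥T → ↥T → Prop := fun a b => b = a ∨ b = P a
  have hrequiv : Equivalence r := by
    constructor
    · intro a; exact Or.inl rfl
    · intro a b h
      rcases h with h | h
      · exact Or.inl h.symm
      · right; rw [h, hPinv]
    · intro a b c h1 h2
      rcases h1 with h1 | h1 <;> rcases h2 with h2 | h2
      · exact Or.inl (h2.trans h1)
      · right; rw [h2, h1]
      · right; rw [h2, h1]
      · left; rw [h2, h1, hPinv]
  let sd : Setoid ↥T := ⟨r, hrequiv⟩
  haveI : Fintype (Quotient sd) := Fintype.ofFinite _
  have fin2 : ∀ x : Fin 2, x ≠ 0 → x = 1 := by decide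
  let f : Quotient sd × Fin 2 → ↥T := fun x => if x.2 = 0 then x.1.out else P x.1.out
  have hfmk : ∀ x : Quotient sd × Fin 2, Quotient.mk sd (f x) = x.1 := by
    intro x
    by_cases h : x.2 = 0
    · simp only [f, h, if_pos]
      exact Quotient.out_eq x.1
    · simp only [f, h, if_neg, ite_false]
      have h1 : Quotient.mk sd (P x.1.out) = Quotient.mk sd x.1.out :=
        Quotient.sound (Or.inr (hPinv x.1.out).symm)
      rw [h1, Quotient.out_eq]
  have hfbij : Function.Bijective f := by
    constructor
    · intro x y hxy
      have hq : x.1 = y.1 := by rw [← hfmk x, ← hfmk y, hxy]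
      have h2 : x.2 = y.2 := by
        by_contra h2
        by_cases hx0 : x.2 = 0
        · have hy1 : y.2 ≠ 0 := fun h => h2 (hx0.trans h.symm)
          have : x.1.out = P y.1.out := by
            simpa only [f, hx0, if_pos, hy1, if_neg, ite_false] using hxy
          rw [← hq] at this
          exact hPne x.1.out this.symm
        · have hy0 : y.2 = 0 := by
            by_contra hy0
            exact h2 ((fin2 _ hx0).trans (fin2 _ hy0).symm)
          have : P x.1.out = y.1.out := by
            simpa only [f, hx0, hy0, if_pos, if_neg, ite_false] using hxy
          rw [← hq] at this
          exact hPne x.1.out this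
      exact Prod.ext hq h2
    · intro s
      have h := Quotient.mk_out (s := sd) s
      rcases h with h | h
      · exact ⟨(Quotient.mk sd s, 0), by simp only [f, if_pos]; exact h.symm⟩
      · refine ⟨(Quotient.mk sd s, 1), ?_⟩
        have : (1 : Fin 2) ≠ 0 := by decide
        simp only [f, this, if_neg, ite_false]
        exact h.symm
  have hcardT : Fintype.card ↥T = i := by
    rw [← Nat.card_eq_fintype_card, Nat.card_coe_set_eq, hTcard]
  have hcard2 : Fintype.card ↥T = 2 * Fintype.card (Quotient sd) := by
    rw [← Fintype.card_of_bijective hfbij, Fintype.card_prod, Fintype.card_fin]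
    ring
  set m := Fintype.card (Quotient sd) with hmdef
  have him : i = 2 * m := by omega
  have hmn : (n - 2) / 2 = m := by omega
  let eQ : Quotient sd ≃ Fin m := Fintype.equivFin _
  let F : Fin m × Fin 2 → ↥T := fun x => f (eQ.symm x.1, x.2)
  have hFinj : Function.Injective F := by
    intro x y h
    have h0 := hfbij.1 h
    have h1 : eQ.symm x.1 = eQ.symm y.1 ∧ x.2 = y.2 := Prod.ext_iff.mp h0
    exact Prod.ext (eQ.symm.injective h1.1) h1.2
  have hFsurj : ∀ s : ↥T, ∃ x, F x = s := by
    intro s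
    obtain ⟨x, hx⟩ := hfbij.2 s
    refine ⟨(eQ x.1, x.2), ?_⟩
    simp only [F, Equiv.symm_apply_apply]
    exact hx
  have hφT : ∀ x, (F x).val ∈ T := fun x => (F x).prop
  let φ : (Fin 2 ⊕ Fin m × Fin 2) → V := fun a =>
    match a with
    | Sum.inl x => if x = 0 then u else w
    | Sum.inr x => (F x).val
  have hφbij : Function.Bijective φ := by
    constructor
    · rintro (x | x) (y | y) h
      · by_cases hx : x = 0 <;> by_cases hy : y = 0
        · rw [hx, hy]
        · exact absurd (by simpa only [φ, hx, hy, if_pos, if_neg, ite_false] using h) huw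
        · have hw' : w = u := by simpa only [φ, hx, hy, if_pos, if_neg, ite_false] using h
          exact absurd hw'.symm huw
        · rw [fin2 x hx, fin2 y hy]
      · exfalso
        by_cases hx : x = 0
        · have : u = (F y).val := by simpa only [φ, hx, if_pos] using h
          exact hu_nT (this ▸ hφT y)
        · have : w = (F y).val := by simpa only [φ, hx, if_neg, ite_false] using h
          exact hw_nT (this ▸ hφT y)
      · exfalso
        by_cases hy : y = 0
        · have : u = (F x).val := by simpa only [φ, hy, if_pos] using h.symm
          exact hu_nT (this ▸ hφT x)
        · have : w = (F x).val := by simpa only [φ, hy, if_neg, ite_false] using h.symm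
          exact hw_nT (this ▸ hφT x)
      · have : F x = F y := Subtype.coe_injective (by simpa only [φ] using h)
        rw [hFinj this]
    · intro z
      rcases Vset z with h | h | h
      · exact ⟨Sum.inl 0, by simp only [φ, if_pos]; exact h.symm⟩
      · refine ⟨Sum.inl 1, ?_⟩
        have h10 : (1 : Fin 2) ≠ 0 := by decide
        simp only [φ, h10, if_neg, ite_false]
        exact h.symm
      · obtain ⟨x, hx⟩ := hFsurj ⟨z, h⟩
        exact ⟨Sum.inr x, congrArg Subtype.val hx⟩
  have hPF : ∀ (j : Fin m) (k k' : Fin 2), k ≠ k' → (F (j, k')).val = p (F (j, k)).val := by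
    have hcase : ∀ k k' : Fin 2, k ≠ k' → (k = 0 ∧ k' = 1) ∨ (k = 1 ∧ k' = 0) := by decide
    have h10 : (1 : Fin 2) ≠ 0 := by decide
    intro j k k' hkk
    have hFP : F (j, k') = P (F (j, k)) := by
      rcases hcase k k' hkk with ⟨h1, h2⟩ | ⟨h1, h2⟩
      · rw [h1, h2]
        simp only [F, f, h10, if_neg, if_pos, ite_false]
      · rw [h1, h2]
        simp only [F, f, h10, if_neg, if_pos, ite_false]
        exact (hPinv _).symm
    rw [hFP, hPval]
  have hadjF : ∀ (j j' : Fin m) (k k' : Fin 2),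
      G.Adj (F (j, k)).val (F (j', k')).val ↔ (j = j' ∧ k ≠ k') := by
    intro j j' k k'
    rw [hadj_iff _ (hφT (j, k)) _ (hφT (j', k'))]
    constructor
    · intro h
      have hkcase : ∀ k : Fin 2, k ≠ (if k = 0 then 1 else 0 : Fin 2) := by decide
      set k'' : Fin 2 := if k = 0 then 1 else 0 with hk''
      have hppf := hPF j k k'' (hkcase k)
      have heq : (F (j', k')).val = (F (j, k'')).val := h.trans hppf.symm
      have hpe : (j', k') = (j, k'') := hFinj (Subtype.coe_injective heq)
      have h1 : j' = j := (Prod.ext_iff.mp hpe).1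
      have h2 : k' = k'' := (Prod.ext_iff.mp hpe).2
      exact ⟨h1.symm, fun hc => (hkcase k) (hc.trans h2)⟩
    · rintro ⟨h1, h2⟩
      rw [← h1]
      exact hPF j k k' h2
  let eqv : (Fin 2 ⊕ Fin m × Fin 2) ≃ V := Equiv.ofBijective φ hφbij
  refine ⟨by omega, ?_, ?_⟩
  · -- the isomorphism
    rw [hmn]
    refine ⟨⟨eqv.symm, ?_⟩⟩
    intro a b
    conv_rhs => rw [← eqv.apply_symm_apply a, ← eqv.apply_symm_apply b]
    generalize eqv.symm a = x
    generalize eqv.symm b = y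
    have heqv : ∀ c, eqv c = φ c := fun c => rfl
    rw [heqv, heqv]
    have hKadj : ∀ a b : Fin 2 ⊕ Fin m × Fin 2, (K2JoinMK2 m).Adj a b ↔
        (a ≠ b ∧ ∀ i x j y, a = Sum.inr (i, x) → b = Sum.inr (j, y) → i = j) :=
      fun a b => Iff.rfl
    have h10 : (1 : Fin 2) ≠ 0 := by decide
    rcases x with x | ⟨j, k⟩ <;> rcases y with y | ⟨j', k'⟩
    · -- inl / inl
      rw [hKadj]
      by_cases hx : x = 0 <;> by_cases hy : y = 0
      · subst hx; subst hy
        simp only [φ]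
        simp [G.irrefl]
      · rw [hx, fin2 y hy]
        simp only [φ, h10, if_pos, if_neg, ite_false]
        simp [hadj_uw]
      · rw [hy, fin2 x hx]
        simp only [φ, h10, if_pos, if_neg, ite_false]
        simp [hadj_uw.symm]
      · rw [fin2 x hx, fin2 y hy]
        simp only [φ]
        simp [G.irrefl]
    · -- inl / inr
      rw [hKadj]
      have hG : G.Adj (φ (Sum.inl x)) (φ (Sum.inr (j', k'))) := by
        by_cases hx : x = 0
        · rw [hx]
          simp only [φ, if_pos]
          exact hTsub (hφT (j', k'))
        · rw [fin2 x hx]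
          simp only [φ, h10, if_neg, ite_false]
          exact (key _ (hφT (j', k'))).symm
      simp [hG]
    · -- inr / inl
      rw [hKadj]
      have hG : G.Adj (φ (Sum.inr (j, k))) (φ (Sum.inl y)) := by
        by_cases hy : y = 0
        · rw [hy]
          simp only [φ, if_pos]
          exact (hTsub (hφT (j, k)) : G.Adj u _).symm
        · rw [fin2 y hy]
          simp only [φ, h10, if_neg, ite_false]
          exact key _ (hφT (j, k))
      simp [hG]
    · -- inr / inr
      rw [hKadj]
      have hG : G.Adj (φ (Sum.inr (j, k))) (φ (Sum.inr (j', k'))) ↔ (j = j' ∧ k ≠ k') :=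
        hadjF j j' k k'
      rw [hG]
      constructor
      · rintro ⟨h1, h2⟩
        have := h2 j k j' k' rfl rfl
        refine ⟨this, fun hk => h1 ?_⟩
        rw [this, hk]
      · rintro ⟨h1, h2⟩
        constructor
        · intro hc
          apply h2
          have := Sum.inr.inj hc
          exact (Prod.ext_iff.mp this).2
        · intro i1 x1 j1 y1 hxe hye
          have e1 : (j, k) = (i1, x1) := Sum.inr.inj hxe
          have e2 : (j', k') = (j1, y1) := Sum.inr.inj hye
          have f1 : j = i1 := (Prod.ext_iff.mp e1).1
          have f2 : j' = j1 := (Prod.ext_iff.mp e2).1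
          rw [← f1, ← f2]
          exact h1
  · -- edge count
    haveI : DecidableRel G.Adj := Classical.decRel _
    have hdeg_eq : ∀ v : V, G.degree v = (G.neighborSet v).ncard := by
      intro v
      rw [← SimpleGraph.card_neighborSet_eq_degree, ← Nat.card_eq_fintype_card,
        Nat.card_coe_set_eq]
    have hNw : G.neighborSet w = insert u T := by
      ext x
      constructor
      · intro hx
        have hxw : x ≠ w := fun h => G.irrefl (h ▸ (hx : G.Adj w x))
        rcases Vset x with h | h | h
        · exact h ▸ Set.mem_insert _ _
        · exact absurd h hxw
        · exact Set.mem_insert_of_mem _ h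
      · intro hx
        rcases hx with h | h
        · exact h ▸ (hadj_uw.symm : G.Adj w u)
        · exact (key x h).symm
    have hdegw : G.degree w = i + 1 := by
      rw [hdeg_eq, hNw, Set.ncard_insert_of_notMem hu_nT, hTcard]
    have hdegu : G.degree u = i + 1 := by rw [hdeg_eq, hdeg]
    have hunivF : (Finset.univ : Finset V) = insert u (insert w T.toFinset) := by
      ext z
      simp only [Finset.mem_univ, true_iff, Finset.mem_insert, Set.mem_toFinset]
      exact Vset z
    have hTfcard : T.toFinset.card = i := by
      rw [← Set.ncard_eq_toFinset_card', hTcard]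
    have hTsum : ∑ s ∈ T.toFinset, G.degree s = i * 3 := by
      rw [Finset.sum_congr rfl (g := fun _ => 3) (fun s hs => by
        rw [hdeg_eq]
        exact (Set.mem_toFinset.mp hs).1), Finset.sum_const, smul_eq_mul, hTfcard]
    have hsum := SimpleGraph.sum_degrees_eq_twice_card_edges G
    rw [hunivF, Finset.sum_insert (by simp [huw, hu_nT]),
      Finset.sum_insert (by simp [hw_nT]), hdegu, hdegw, hTsum] at hsum
    have hE : G.edgeSet.ncard = G.edgeFinset.card := by
      rw [SimpleGraph.edgeFinset_card, ← Nat.card_eq_fintype_card, Nat.card_coe_set_eq]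
    omega
end

section
/- Let G be a 2-connected locally nonforesty graph of order n ≥ 8 with maximum degree at most 4, and let u and v be two distinct vertices of G of degree exactly 3. Then the closed neighborhoods N[u] and N[v] are either disjoint or equal. -/
open SimpleGraph

lemma adj_all_of_card_three {V : Type*} [Fintype V] (hcard : Fintype.card V = 3)
    (G : SimpleGraph V) {p : V} (c : G.Walk p p) (hlen : c.length = 3)
    (hnodup : c.support.tail.Nodup) :
    ∀ a b : V, a ≠ b → G.Adj a b := by
  classical
  match c, hlen with
  | .cons (v := q) h1 (.cons (v := r) h2 (.cons h3 .nil)), _ =>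
    simp only [SimpleGraph.Walk.support_cons, SimpleGraph.Walk.support_nil,
      List.tail_cons, List.nodup_cons, List.mem_cons, List.mem_singleton] at hnodup
    obtain ⟨hq, hr, -⟩ := hnodup
    push_neg at hq
    have hall : ∀ e : V, e = p ∨ e = q ∨ e = r := by
      intro e
      by_contra hcon
      push_neg at hcon
      obtain ⟨hep, heq, her⟩ := hcon
      have : ({e, p, q, r} : Finset V).card = 4 := by
        rw [Finset.card_insert_of_notMem (by simp [hep, heq, her]),
          Finset.card_insert_of_notMem
            (by simp; exact ⟨Ne.symm hq.2.1, fun h => hr (Or.inl h.symm)⟩),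
          Finset.card_insert_of_notMem (by simp; exact hq.1), Finset.card_singleton]
      have h4 := Finset.card_le_univ ({e, p, q, r} : Finset V)
      omega
    intro a b hab
    rcases hall a with ha | ha | ha <;> rcases hall b with hb | hb | hb <;>
      subst ha <;> subst hb <;>
      first
        | exact absurd rfl hab
        | exact h1 | exact h1.symm | exact h2 | exact h2.symm
        | exact h3 | exact h3.symm

lemma triangle_of_not_acyclic {V : Type*} (G : SimpleGraph V) (x : V)
    (h3 : (G.neighborSet x).ncard = 3)
    (hna : ¬ (G.induce (G.neighborSet x)).IsAcyclic) :
    ∀ a b, G.Adj x a → G.Adj x b → a ≠ b → G.Adj a b := by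
  classical
  have hfin : (G.neighborSet x).Finite := Set.finite_of_ncard_ne_zero (by omega)
  haveI : Fintype ↥(G.neighborSet x) := hfin.fintype
  have hcard : Fintype.card ↥(G.neighborSet x) = 3 := by
    rw [← Nat.card_coe_set_eq, Nat.card_eq_fintype_card] at h3
    exact h3
  simp only [SimpleGraph.IsAcyclic] at hna
  push_neg at hna
  obtain ⟨p, c, hc⟩ := hna
  have hlen3 : 3 ≤ c.length := hc.three_le_length
  have hnodup : c.support.tail.Nodup := hc.support_nodup
  have hlenle : c.length ≤ 3 := by
    have h1 := hnodup.length_le_card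
    have h2 : c.support.length = c.length + 1 := c.length_support
    have h3' : c.support.tail.length = c.support.length - 1 := c.support.length_tail
    omega
  have key := adj_all_of_card_three hcard _ c (le_antisymm hlenle hlen3) hnodup
  intro a b ha hb hab
  have := key ⟨a, ha⟩ ⟨b, hb⟩ (fun h => hab (congrArg Subtype.val h))
  simpa using this

lemma set_mem_three {α : Type*} {s : Set α} (h3 : s.ncard = 3) {w : α} (hw : w ∈ s) :
    ∃ a b, w ≠ a ∧ w ≠ b ∧ a ≠ b ∧ s = {w, a, b} := by
  obtain ⟨x, y, z, hxy, hxz, hyz, rfl⟩ := Set.ncard_eq_three.mp h3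
  simp only [Set.mem_insert_iff, Set.mem_singleton_iff] at hw
  rcases hw with rfl | rfl | rfl
  · exact ⟨y, z, hxy, hxz, hyz, rfl⟩
  · exact ⟨x, z, hxy.symm, hyz, hxz, by ext t; simp; tauto⟩
  · exact ⟨x, y, hxz.symm, hyz.symm, hxy, by ext t; simp; tauto⟩

lemma walk_mem_of_closed {V : Type*} {G : SimpleGraph V} {X : Set V}
    (hX : ∀ x ∈ X, ∀ y, G.Adj x y → y ∈ X) {x y : V} (p : G.Walk x y) (hx : x ∈ X) :
    y ∈ X := by
  induction p with
  | nil => exact hx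
  | cons h p ih => exact ih (hX _ hx _ h)

lemma closed_nbr_eq_of_adj {V : Type*} [Fintype V] (G : SimpleGraph V) (u v : V)
    (hu : (G.neighborSet u).ncard = 3) (hv : (G.neighborSet v).ncard = 3)
    (triu : ∀ a b, G.Adj u a → G.Adj u b → a ≠ b → G.Adj a b)
    (hadj : G.Adj u v) :
    insert v (G.neighborSet v) = insert u (G.neighborSet u) := by
  have hvmem : v ∈ G.neighborSet u := hadj
  have hsub : insert u (G.neighborSet u \ {v}) ⊆ G.neighborSet v := by
    rintro z (rfl | ⟨hz, hzv⟩)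
    · exact hadj.symm
    · exact triu v z hadj hz (fun h => hzv (h ▸ rfl))
  have hunm : u ∉ G.neighborSet u \ {v} := fun h => G.notMem_neighborSet_self h.1
  have hcardL : (insert u (G.neighborSet u \ {v})).ncard = 3 := by
    rw [Set.ncard_insert_of_notMem hunm (Set.toFinite _),
      Set.ncard_diff_singleton_of_mem hvmem, hu]
  have heq : insert u (G.neighborSet u \ {v}) = G.neighborSet v :=
    Set.eq_of_subset_of_ncard_le hsub (by rw [hv, hcardL]) (Set.toFinite _)
  rw [← heq, Set.insert_comm, Set.insert_diff_singleton,
    Set.insert_eq_self.mpr hvmem]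

theorem stmt_11 {V : Type*} [Fintype V] (G : SimpleGraph V) (n : ℕ)
    (hn : Fintype.card V = n) (h8 : 8 ≤ n)
    (hconn : KConnected G 2) (hloc : LocallyNonforesty G)
    -- maximum degree at most 4
    (hmax : ∀ v : V, (G.neighborSet v).ncard ≤ 4)
    (u v : V) (huv : u ≠ v)
    (hu : (G.neighborSet u).ncard = 3) (hv : (G.neighborSet v).ncard = 3) :
    Disjoint (insert u (G.neighborSet u)) (insert v (G.neighborSet v)) ∨
      insert u (G.neighborSet u) = insert v (G.neighborSet v) := by
  classical
  have tri : ∀ x : V, (G.neighborSet x).ncard = 3 →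
      ∀ a b, G.Adj x a → G.Adj x b → a ≠ b → G.Adj a b :=
    fun x hx => triangle_of_not_acyclic G x hx (hloc x)
  by_cases hdisj : Disjoint (insert u (G.neighborSet u)) (insert v (G.neighborSet v))
  · exact Or.inl hdisj
  right
  by_cases hadj : G.Adj u v
  · exact (closed_nbr_eq_of_adj G u v hu hv (tri u hu) hadj).symm
  exfalso
  obtain ⟨x, hxu, hxv⟩ := Set.not_disjoint_iff.mp hdisj
  rcases hxu with rfl | hxu
  · rcases hxv with rfl | hxv
    · exact huv rfl
    · exact hadj (hxv : G.Adj v x).symm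
  rcases hxv with rfl | hxv
  · exact hadj hxu
  -- the shared-neighbor case
  have hw_u : G.Adj u x := hxu
  have hw_v : G.Adj v x := hxv
  obtain ⟨a, b, hwa', hwb', hab, hNu⟩ := set_mem_three hu hxu
  obtain ⟨c, d, hwc', hwd', hcd, hNv⟩ := set_mem_three hv hxv
  have hau : G.Adj u a := by
    have : a ∈ G.neighborSet u := by rw [hNu]; simp
    exact this
  have hbu : G.Adj u b := by
    have : b ∈ G.neighborSet u := by rw [hNu]; simp
    exact this
  have hvc : G.Adj v c := by
    have : c ∈ G.neighborSet v := by rw [hNv]; simp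
    exact this
  have hvd : G.Adj v d := by
    have : d ∈ G.neighborSet v := by rw [hNv]; simp
    exact this
  have hwa : G.Adj x a := tri u hu x a hw_u hau hwa'
  have hwb : G.Adj x b := tri u hu x b hw_u hbu hwb'
  have hwc : G.Adj x c := tri v hv x c hw_v hvc hwc'
  have hwd : G.Adj x d := tri v hv x d hw_v hvd hwd'
  have habAdj : G.Adj a b := tri u hu a b hau hbu hab
  -- distinctness
  have hua : u ≠ a := G.ne_of_adj hau
  have hub : u ≠ b := G.ne_of_adj hbu
  have hav : a ≠ v := fun h => hadj (h ▸ hau)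
  have hbv : b ≠ v := fun h => hadj (h ▸ hbu)
  have huw : u ≠ x := G.ne_of_adj hw_u
  have hvw : v ≠ x := G.ne_of_adj hw_v
  -- N(x) = {u, a, b, v}
  have hTsub : ({u, a, b, v} : Set V) ⊆ G.neighborSet x := by
    rintro z (rfl | rfl | rfl | rfl)
    · exact hw_u.symm
    · exact hwa
    · exact hwb
    · exact hw_v.symm
  have hTcard : ({u, a, b, v} : Set V).ncard = 4 := by
    rw [Set.ncard_insert_of_notMem (by simp [hua, hub, huv]) (Set.toFinite _),
      Set.ncard_insert_of_notMem (by simp [hab, hav]) (Set.toFinite _),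
      Set.ncard_insert_of_notMem (by simp [hbv]) (Set.toFinite _),
      Set.ncard_singleton]
  have hNw : ({u, a, b, v} : Set V) = G.neighborSet x :=
    Set.eq_of_subset_of_ncard_le hTsub (by rw [hTcard]; exact hmax x) (Set.toFinite _)
  -- c and d are in {a, b}
  have hcmem : c ∈ ({u, a, b, v} : Set V) := hNw ▸ (hwc : c ∈ G.neighborSet x)
  have hdmem : d ∈ ({u, a, b, v} : Set V) := hNw ▸ (hwd : d ∈ G.neighborSet x)
  have hcu : c ≠ u := fun h => hadj (h ▸ hvc).symm
  have hdu : d ≠ u := fun h => hadj (h ▸ hvd).symm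
  have hcv : c ≠ v := fun h => G.irrefl (h ▸ hvc)
  have hdv : d ≠ v := fun h => G.irrefl (h ▸ hvd)
  have hcab : c = a ∨ c = b := by
    rcases hcmem with h | h | h | h
    · exact absurd h hcu
    · exact Or.inl h
    · exact Or.inr h
    · exact absurd h hcv
  have hdab : d = a ∨ d = b := by
    rcases hdmem with h | h | h | h
    · exact absurd h hdu
    · exact Or.inl h
    · exact Or.inr h
    · exact absurd h hdv
  have hNv' : G.neighborSet v = {x, a, b} := by
    rcases hcab with rfl | rfl <;> rcases hdab with rfl | rfl
    · exact absurd rfl hcd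
    · exact hNv
    · rw [hNv]; ext t; simp; tauto
    · exact absurd rfl hcd
  have hva : G.Adj v a := by
    have : a ∈ G.neighborSet v := by rw [hNv']; simp
    exact this
  have hvb : G.Adj v b := by
    have : b ∈ G.neighborSet v := by rw [hNv']; simp
    exact this
  -- N(a) = {u, x, b, v}
  have hwb'' : x ≠ b := hwb'
  have hNa : ({u, x, b, v} : Set V) = G.neighborSet a := by
    apply Set.eq_of_subset_of_ncard_le
    · rintro z (rfl | rfl | rfl | rfl)
      · exact hau.symm
      · exact hwa.symm
      · exact habAdj
      · exact hva.symm
    · rw [Set.ncard_insert_of_notMem (by simp [huw, hub, huv]) (Set.toFinite _),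
        Set.ncard_insert_of_notMem (by simp [hwb'', Ne.symm hvw]) (Set.toFinite _),
        Set.ncard_insert_of_notMem (by simp [hbv]) (Set.toFinite _),
        Set.ncard_singleton]
      exact hmax a
    · exact Set.toFinite _
  have hNb : ({u, x, a, v} : Set V) = G.neighborSet b := by
    apply Set.eq_of_subset_of_ncard_le
    · rintro z (rfl | rfl | rfl | rfl)
      · exact hbu.symm
      · exact hwb.symm
      · exact habAdj.symm
      · exact hvb.symm
    · rw [Set.ncard_insert_of_notMem (by simp [huw, hua, huv]) (Set.toFinite _),
        Set.ncard_insert_of_notMem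
          (by simp [hwa', Ne.symm hvw]) (Set.toFinite _),
        Set.ncard_insert_of_notMem (by simp [hav]) (Set.toFinite _),
        Set.ncard_singleton]
      exact hmax b
    · exact Set.toFinite _
  -- the closed set X
  set X : Set V := {u, v, x, a, b} with hX
  have hclosed : ∀ p ∈ X, ∀ q, G.Adj p q → q ∈ X := by
    rintro p (rfl | rfl | rfl | rfl | rfl) q hpq
    · have : q ∈ G.neighborSet p := hpq
      rw [hNu] at this
      rcases this with rfl | rfl | rfl <;> simp [hX]
    · have : q ∈ G.neighborSet p := hpq
      rw [hNv'] at this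
      rcases this with rfl | rfl | rfl <;> simp [hX]
    · have : q ∈ G.neighborSet p := hpq
      rw [← hNw] at this
      rcases this with rfl | rfl | rfl | rfl <;> simp [hX]
    · have : q ∈ G.neighborSet p := hpq
      rw [← hNa] at this
      rcases this with rfl | rfl | rfl | rfl <;> simp [hX]
    · have : q ∈ G.neighborSet p := hpq
      rw [← hNb] at this
      rcases this with rfl | rfl | rfl | rfl <;> simp [hX]
  -- G is connected
  have h0 := hconn.2 ∅ (by simp)
  have huniv : ((↑(∅ : Finset V) : Set V)ᶜ) = Set.univ := by simp
  rw [huniv] at h0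
  have hGc : G.Connected := (SimpleGraph.induceUnivIso G).connected_iff.mp h0
  -- there is a vertex outside X
  have hXcard : X.ncard ≤ 5 := by
    calc X.ncard ≤ ({v, x, a, b} : Set V).ncard + 1 := Set.ncard_insert_le _ _
      _ ≤ ({x, a, b} : Set V).ncard + 1 + 1 := by
        have := Set.ncard_insert_le v ({x, a, b} : Set V); omega
      _ ≤ ({a, b} : Set V).ncard + 3 := by
        have := Set.ncard_insert_le x ({a, b} : Set V); omega
      _ ≤ ({b} : Set V).ncard + 4 := by
        have := Set.ncard_insert_le a ({b} : Set V); omega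
      _ = 5 := by rw [Set.ncard_singleton]
  obtain ⟨z, hz⟩ : ∃ z, z ∉ X := by
    by_contra hcon
    push_neg at hcon
    have : X = Set.univ := Set.eq_univ_of_forall hcon
    have h5 : X.ncard = n := by
      rw [this, Set.ncard_univ, Nat.card_eq_fintype_card, hn]
    omega
  obtain ⟨p⟩ := hGc.preconnected u z
  exact hz (walk_mem_of_closed hclosed p (by simp [hX]))
end

section
/- Let n ≥ 8 and let G be a connected locally nonforesty graph of order n whose size is minimum among all connected locally nonforesty graphs of order n. Then no block of G has order 3 (equivalently, no block of G is isomorphic to K_3). -/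
/-- A vertex set `B` induces a block of `G`: the induced subgraph `G[B]` is connected,
has no cut vertex, and `B` is maximal with these properties.  (A block of a graph is a
maximal connected subgraph without a cut vertex; such a subgraph is always induced.) -/
def IsBlock {V : Type*} (G : SimpleGraph V) (B : Set V) : Prop :=
  (G.induce B).Connected ∧
    (∀ v ∈ B, (G.induce (B \ {v})).Preconnected) ∧
    ∀ C : Set V, B ⊆ C → (G.induce C).Connected →
      (∀ v ∈ C, (G.induce (C \ {v})).Preconnected) → C = B


open SimpleGraph

section Helpers

variable {V : Type*} {W : Type*} {G : SimpleGraph V}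

/-- Inclusion homomorphism from an induced subgraph. -/
def inclHom (G : SimpleGraph V) (S : Set V) : G.induce S →g G :=
  ⟨Subtype.val, fun {a b} h => h⟩

@[simp] lemma inclHom_apply {S : Set V} (a : ↥S) : inclHom G S a = a.val := rfl

/-- Lift a walk whose support is contained in `S` to the induced subgraph. -/
def liftWalk {S : Set V} : ∀ {a b : V} (p : G.Walk a b)
    (h : ∀ w ∈ p.support, w ∈ S),
    (G.induce S).Walk ⟨a, h a p.start_mem_support⟩ ⟨b, h b p.end_mem_support⟩
  | _, _, Walk.nil, _ => Walk.nil
  | _, _, @Walk.cons _ _ u v _ hadj p, h =>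
      Walk.cons
        (show (G.induce S).Adj ⟨u, h u (Walk.cons hadj p).start_mem_support⟩
            ⟨v, h v (by simp)⟩ from hadj)
        (liftWalk p fun w hw => h w (List.mem_cons_of_mem _ hw))

lemma liftWalk_map {S : Set V} : ∀ {a b : V} (p : G.Walk a b)
    (h : ∀ w ∈ p.support, w ∈ S),
    (liftWalk p h).map (inclHom G S) = p
  | _, _, Walk.nil, _ => rfl
  | _, _, Walk.cons hadj p, h => by
      simp [liftWalk, Walk.map_cons, liftWalk_map p]

lemma not_isAcyclic_induce_iff {S : Set V} :
    ¬ (G.induce S).IsAcyclic ↔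
      ∃ (a : V) (p : G.Walk a a), p.IsCycle ∧ ∀ w ∈ p.support, w ∈ S := by
  constructor
  · intro h
    rw [SimpleGraph.IsAcyclic] at h
    push_neg at h
    obtain ⟨v, c, hc⟩ := h
    refine ⟨v.val, c.map (inclHom G S), hc.map Subtype.val_injective, ?_⟩
    intro w hw
    replace hw : w ∈ c.support.map (inclHom G S) := by
      rw [← SimpleGraph.Walk.support_map]; exact hw
    obtain ⟨u, _, rfl⟩ := List.mem_map.mp hw
    exact u.2
  · rintro ⟨a, p, hp, hS⟩ hacyc
    have h1 := hacyc (liftWalk p hS)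
    rw [← liftWalk_map p hS] at hp
    exact h1 ((SimpleGraph.Walk.map_isCycle_iff_of_injective
      Subtype.val_injective).mp hp)

lemma exists_two_nbrs {v z : V} {c : G.Walk v v} (hc : c.IsCycle)
    (hz : z ∈ c.support) :
    ∃ b₁ b₂ : V, b₁ ≠ b₂ ∧ G.Adj z b₁ ∧ G.Adj z b₂ ∧
      b₁ ∈ c.support ∧ b₂ ∈ c.support := by
  classical
  have hq : (c.rotate z hz).IsCycle := hc.rotate hz
  obtain ⟨b, hadj, q', hq'⟩ : ∃ (b : V) (h : G.Adj z b) (q' : G.Walk b z),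
      c.rotate z hz = Walk.cons h q' := by
    cases hqq : c.rotate z hz with
    | nil => exact absurd hqq (by rw [hqq] at hq; exact absurd rfl hq.ne_nil)
    | cons h p => exact ⟨_, h, p, rfl⟩
  obtain ⟨c₂, hadj₂, r, hr⟩ := Walk.exists_eq_cons_of_ne hadj.ne q'.reverse
  have hc2q' : s(z, c₂) ∈ q'.edges := by
    have : s(z, c₂) ∈ q'.reverse.edges := by
      rw [hr, Walk.edges_cons]; exact List.mem_cons_self
    rwa [Walk.edges_reverse, List.mem_reverse] at this
  have hnodup : ((c.rotate z hz).edges).Nodup := hq.edges_nodup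
  rw [hq', Walk.edges_cons] at hnodup
  have hbne : b ≠ c₂ := by
    rintro rfl
    exact (List.nodup_cons.mp hnodup).1 hc2q'
  have hmem1 : s(z, b) ∈ (c.rotate z hz).edges := by
    rw [hq', Walk.edges_cons]; exact List.mem_cons_self
  have hmem2 : s(z, c₂) ∈ (c.rotate z hz).edges := by
    rw [hq', Walk.edges_cons]; exact List.mem_cons_of_mem _ hc2q'
  have hperm := (c.rotate_edges z hz).perm
  rw [hperm.mem_iff] at hmem1 hmem2
  exact ⟨b, c₂, hbne, hadj, hadj₂,
    c.snd_mem_support_of_mem_edges hmem1, c.snd_mem_support_of_mem_edges hmem2⟩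

lemma preconnected_of_hub {H : SimpleGraph W} (a : W)
    (h : ∀ b : W, a = b ∨ H.Adj a b) : H.Preconnected := by
  intro u v
  have key : ∀ b, H.Reachable a b := fun b =>
    (h b).elim (fun e => e ▸ Reachable.refl a) fun ha => ha.reachable
  exact (key u).symm.trans (key v)

end Helpers

theorem stmt_14 {V : Type*} [Fintype V] (G : SimpleGraph V) (n : ℕ)
    (hn : Fintype.card V = n) (h8 : 8 ≤ n)
    (hconn : G.Connected) (hloc : LocallyNonforesty G)
    -- `G` has minimum size among connected locally nonforesty graphs of order `n`
    (hmin : ∀ H : SimpleGraph (Fin n), H.Connected → LocallyNonforesty H →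
      G.edgeSet.ncard ≤ H.edgeSet.ncard) :
    ∀ B : Set V, IsBlock G B → B.ncard ≠ 3 := by
  classical
  intro B hB hcard
  obtain ⟨x, y, z, hxy, hxz, hyz, hBeq⟩ := Set.ncard_eq_three.mp hcard
  have hxB : x ∈ B := by rw [hBeq]; simp
  have hyB : y ∈ B := by rw [hBeq]; simp
  have hzB : z ∈ B := by rw [hBeq]; simp
  -- pairwise adjacency within the block
  have pairadj : ∀ a b c : V, B = {a, b, c} → a ≠ b → a ≠ c → b ≠ c → G.Adj b c := by
    intro a b c hBe hab hac hbc
    have hprec := hB.2.1 a (by rw [hBe]; exact Set.mem_insert _ _)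
    have hset : B \ {a} = ({b, c} : Set V) := by
      rw [hBe]; ext u
      simp only [Set.mem_diff, Set.mem_insert_iff, Set.mem_singleton_iff]
      constructor
      · rintro ⟨(rfl | rfl | rfl), h2⟩
        · exact absurd rfl h2
        · exact Or.inl rfl
        · exact Or.inr rfl
      · rintro (rfl | rfl)
        · exact ⟨Or.inr (Or.inl rfl), Ne.symm hab⟩
        · exact ⟨Or.inr (Or.inr rfl), Ne.symm hac⟩
    rw [hset] at hprec
    have hbm : b ∈ ({b, c} : Set V) := Set.mem_insert _ _
    have hcm : c ∈ ({b, c} : Set V) := Set.mem_insert_of_mem _ rfl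
    obtain ⟨p⟩ := hprec ⟨b, hbm⟩ ⟨c, hcm⟩
    have hne : (⟨b, hbm⟩ : ↥({b, c} : Set V)) ≠ ⟨c, hcm⟩ := by
      intro hcon; exact hbc (congrArg Subtype.val hcon)
    obtain ⟨u, hadj, q, hq⟩ := SimpleGraph.Walk.exists_eq_cons_of_ne hne p
    have hadj' : G.Adj b u.val := hadj
    have hu2 := u.2
    simp only [Set.mem_insert_iff, Set.mem_singleton_iff] at hu2
    rcases hu2 with h | h
    · rw [h] at hadj'; exact absurd rfl hadj'.ne
    · rwa [h] at hadj'
  have ayz : G.Adj y z := pairadj x y z hBeq hxy hxz hyz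
  have axz : G.Adj x z := pairadj y x z
    (by rw [hBeq]; ext u; simp only [Set.mem_insert_iff, Set.mem_singleton_iff]; tauto)
    (Ne.symm hxy) hyz hxz
  have axy : G.Adj x y := pairadj z x y
    (by rw [hBeq]; ext u; simp only [Set.mem_insert_iff, Set.mem_singleton_iff]; tauto)
    (Ne.symm hxz) (Ne.symm hyz) hxy
  -- common neighbors of two block vertices lie in the block
  have hcn : ∀ w p q : V, p ∈ B → q ∈ B → p ≠ q → G.Adj w p → G.Adj w q → w ∈ B := by
    intro w p q hp hq hpq hwp hwq
    by_contra hw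
    have hadjB : ∀ u v' : V, u ∈ B → v' ∈ B → u ≠ v' → G.Adj u v' := by
      intro u v' hu hv' huv
      rw [hBeq] at hu hv'
      simp only [Set.mem_insert_iff, Set.mem_singleton_iff] at hu hv'
      rcases hu with rfl | rfl | rfl <;> rcases hv' with rfl | rfl | rfl <;>
        first
          | exact absurd rfl huv
          | exact axy | exact axz | exact ayz
          | exact axy.symm | exact axz.symm | exact ayz.symm
    set C : Set V := insert w B with hC
    have hBC : B ⊆ C := Set.subset_insert _ _
    have hconnC : (G.induce C).Connected := by
      have hCne : Nonempty ↥C := ⟨⟨w, Set.mem_insert _ _⟩⟩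
      refine ⟨preconnected_of_hub ⟨p, hBC hp⟩ ?_⟩
      rintro ⟨u, hu⟩
      rcases Set.mem_insert_iff.mp hu with rfl | huB
      · right; exact (hwp.symm : G.Adj p u)
      · by_cases h1 : p = u
        · left; exact Subtype.ext h1
        · right; exact hadjB p u hp huB h1
    have hprecC : ∀ v' ∈ C, (G.induce (C \ {v'})).Preconnected := by
      intro v' hv'
      set a' : V := if v' = p then q else p with ha'def
      have ha'B : a' ∈ B := by rw [ha'def]; split_ifs; exacts [hq, hp]
      have ha'ne : a' ≠ v' := by
        rw [ha'def]; split_ifs with h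
        · rw [h]; exact Ne.symm hpq
        · exact fun hcon => h hcon.symm
      have ha'w : G.Adj w a' := by rw [ha'def]; split_ifs; exacts [hwq, hwp]
      have ha'mem : a' ∈ C \ {v'} := ⟨Set.mem_insert_of_mem _ ha'B, ha'ne⟩
      refine preconnected_of_hub ⟨a', ha'mem⟩ ?_
      rintro ⟨u, hu, hune⟩
      by_cases h1 : a' = u
      · left; exact Subtype.ext h1
      · right
        rcases Set.mem_insert_iff.mp hu with rfl | huB
        · exact (ha'w.symm : G.Adj a' u)
        · exact hadjB a' u ha'B huB h1
    have hCB := hB.2.2 C hBC hconnC hprecC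
    exact hw (hCB ▸ Set.mem_insert w B)
  -- a cycle inside the neighborhood of a block vertex avoids the other block vertices
  have avoid : ∀ v' c' : V, v' ∈ B → c' ∈ B → c' ≠ v' →
      ∀ {a : V} (p : G.Walk a a), p.IsCycle →
        (∀ w ∈ p.support, w ∈ G.neighborSet v') → c' ∉ p.support := by
    intro v' c' hv' hc' hne a p hp hsup hcsup
    obtain ⟨b₁, b₂, hb12, hadj1, hadj2, hm1, hm2⟩ := exists_two_nbrs hp hcsup
    have hvb1 : G.Adj v' b₁ := hsup b₁ hm1
    have hvb2 : G.Adj v' b₂ := hsup b₂ hm2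
    have h1B : b₁ ∈ B := hcn b₁ v' c' hv' hc' (Ne.symm hne) hvb1.symm hadj1.symm
    have h2B : b₂ ∈ B := hcn b₂ v' c' hv' hc' (Ne.symm hne) hvb2.symm hadj2.symm
    have hsub : ({b₁, b₂, v', c'} : Set V) ⊆ B := by
      intro u hu
      rcases hu with rfl | rfl | rfl | rfl
      exacts [h1B, h2B, hv', hc']
    have h4 : ({b₁, b₂, v', c'} : Set V).ncard = 4 := by
      rw [Set.ncard_insert_of_notMem (by simp [hb12, hvb1.ne', hadj1.ne']) (Set.toFinite _),
          Set.ncard_insert_of_notMem (by simp [hvb2.ne', hadj2.ne']) (Set.toFinite _),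
          Set.ncard_pair (Ne.symm hne)]
    have hle := Set.ncard_le_ncard hsub (Set.toFinite _)
    rw [h4, hcard] at hle
    omega
  -- the smaller graph
  set G' : SimpleGraph V := G.deleteEdges {s(y, z)} with hG'def
  have hG'adj : ∀ a b : V, G'.Adj a b ↔ G.Adj a b ∧ s(a, b) ≠ s(y, z) := by
    intro a b
    rw [hG'def, SimpleGraph.deleteEdges_adj]
    simp
  have hyx' : G'.Adj y x := (hG'adj y x).mpr ⟨axy.symm, by
    intro h; rw [Sym2.eq_iff] at h
    rcases h with ⟨_, h2⟩ | ⟨h1, _⟩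
    exacts [hxz h2, hyz h1]⟩
  have hxz' : G'.Adj x z := (hG'adj x z).mpr ⟨axz, by
    intro h; rw [Sym2.eq_iff] at h
    rcases h with ⟨h1, _⟩ | ⟨h1, _⟩
    exacts [hxy h1, hxz h1]⟩
  have hconn' : G'.Connected := by
    have hne : Nonempty V := hconn.nonempty
    refine ⟨?_⟩
    intro a b
    obtain ⟨p⟩ := hconn.preconnected a b
    induction p with
    | nil => exact SimpleGraph.Reachable.refl _
    | cons h q ih =>
      rename_i u v w'
      refine SimpleGraph.Reachable.trans ?_ ih
      by_cases he : s(u, v) = s(y, z)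
      · rw [Sym2.eq_iff] at he
        rcases he with ⟨rfl, rfl⟩ | ⟨rfl, rfl⟩
        · exact hyx'.reachable.trans hxz'.reachable
        · exact (hyx'.reachable.trans hxz'.reachable).symm
      · exact ((hG'adj u v).mpr ⟨h, he⟩).reachable
  have hloc' : LocallyNonforesty G' := by
    intro v
    rw [not_isAcyclic_induce_iff]
    obtain ⟨a, p, hp, hsup⟩ := not_isAcyclic_induce_iff.mp (hloc v)
    by_cases hvB : v ∈ B
    · obtain ⟨c', hc'B, hc'ne, hc'mem⟩ : ∃ c', c' ∈ B ∧ c' ≠ v ∧ (c' = y ∨ c' = z) := by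
        by_cases hvz : v = z
        · exact ⟨y, hyB, by rw [hvz]; exact hyz, Or.inl rfl⟩
        · exact ⟨z, hzB, fun hcon => hvz hcon.symm, Or.inr rfl⟩
      have hcavoid : c' ∉ p.support := avoid v c' hvB hc'B hc'ne p hp hsup
      have hedges : ∀ e ∈ p.edges, e ∉ ({s(y, z)} : Set (Sym2 V)) := by
        intro e he hee
        rw [Set.mem_singleton_iff] at hee; subst hee
        rcases hc'mem with rfl | rfl
        · exact hcavoid (p.fst_mem_support_of_mem_edges he)
        · exact hcavoid (p.snd_mem_support_of_mem_edges he)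
      refine ⟨a, p.toDeleteEdges {s(y, z)} hedges, hp.toDeleteEdges G {s(y, z)} hedges, ?_⟩
      intro w hw
      have hw' : w ∈ p.support := by
        rwa [SimpleGraph.Walk.support_transfer] at hw
      have hGA : G.Adj v w := hsup w hw'
      have hne2 : s(v, w) ≠ s(y, z) := by
        intro hvw
        rw [Sym2.eq_iff] at hvw
        rcases hvw with ⟨rfl, rfl⟩ | ⟨rfl, rfl⟩
        · rcases hc'mem with rfl | rfl
          · exact hc'ne rfl
          · exact hcavoid hw'
        · rcases hc'mem with rfl | rfl
          · exact hcavoid hw'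
          · exact hc'ne rfl
      exact (hG'adj v w).mpr ⟨hGA, hne2⟩
    · have hedges : ∀ e ∈ p.edges, e ∉ ({s(y, z)} : Set (Sym2 V)) := by
        intro e he hee
        rw [Set.mem_singleton_iff] at hee; subst hee
        have hy' := p.fst_mem_support_of_mem_edges he
        have hz' := p.snd_mem_support_of_mem_edges he
        exact hvB (hcn v y z hyB hzB hyz (hsup y hy') (hsup z hz'))
      refine ⟨a, p.toDeleteEdges {s(y, z)} hedges, hp.toDeleteEdges G {s(y, z)} hedges, ?_⟩
      intro w hw
      have hw' : w ∈ p.support := by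
        rwa [SimpleGraph.Walk.support_transfer] at hw
      refine (hG'adj v w).mpr ⟨hsup w hw', ?_⟩
      intro hvw
      rw [Sym2.eq_iff] at hvw
      rcases hvw with ⟨rfl, _⟩ | ⟨rfl, _⟩
      exacts [hvB hyB, hvB hzB]
  -- edge counting
  have heyz : s(y, z) ∈ G.edgeSet := ayz
  have hfin : G.edgeSet.Finite := Set.toFinite _
  have hG'edge : G'.edgeSet = G.edgeSet \ {s(y, z)} := by
    rw [hG'def]; exact SimpleGraph.edgeSet_deleteEdges _
  have hG'card : G'.edgeSet.ncard = G.edgeSet.ncard - 1 := by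
    rw [hG'edge]; exact Set.ncard_diff_singleton_of_mem heyz
  have hpos : 0 < G.edgeSet.ncard := (Set.ncard_pos hfin).mpr ⟨_, heyz⟩
  -- transfer to `Fin n`
  obtain ⟨e⟩ : Nonempty (V ≃ Fin n) := ⟨Fintype.equivFinOfCardEq hn⟩
  set H : SimpleGraph (Fin n) := SimpleGraph.map e.toEmbedding G' with hHdef
  let fmap : G' →g H := ⟨fun v => e v, fun h => SimpleGraph.map_adj_apply.mpr h⟩
  have hHconn : H.Connected := hconn'.map fmap e.surjective
  have hHloc : LocallyNonforesty H := by
    intro v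
    rw [not_isAcyclic_induce_iff]
    obtain ⟨a, p, hp, hsup⟩ := not_isAcyclic_induce_iff.mp (hloc' (e.symm v))
    refine ⟨_, p.map fmap, hp.map e.injective, ?_⟩
    intro w hw
    rw [SimpleGraph.Walk.support_map] at hw
    obtain ⟨u, hu, rfl⟩ := List.mem_map.mp hw
    have hadj : G'.Adj (e.symm v) u := hsup u hu
    have hmapped : H.Adj (e (e.symm v)) (e u) := SimpleGraph.map_adj_apply.mpr hadj
    rw [Equiv.apply_symm_apply] at hmapped
    exact hmapped
  have hHcard : H.edgeSet.ncard = G'.edgeSet.ncard := by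
    rw [← Nat.card_coe_set_eq, ← Nat.card_coe_set_eq]
    exact (Nat.card_congr (SimpleGraph.Iso.map e G').mapEdgeSet).symm
  have hfinal := hmin H hHconn hHloc
  rw [hHcard, hG'card] at hfinal
  omega
end
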